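/- arXiv:1701.06884 — 11 statements merged into one kernel-verified Lean document; each statement's English description precedes it below -/
import Mathlib

section
/- Let Y0, Y1, Y2, M0, M1, M2 be finite-valued measurable random variables on a probability space, and suppose M0, M1, M2 are mutually independent. Then H[⟨Y0,Y1⟩ | ⟨M0,M1⟩] + H[⟨Y0,Y2⟩ | ⟨M0,M2⟩] ≥ H[⟨Y0,Y1,Y2⟩ | ⟨M0,M1,M2⟩] + H[Y0 | M0]. (This is Proposition 3 of the paper, a generalization of sub-modularity of entropy, stated with the common part Y0 = Y1∩Y2 of the two collections of random variables and the common part M0 = M1∩M2 of the two collections of independent random variables made explicit.) -/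
open MeasureTheory ProbabilityTheory

/-- The Shannon entropy of a finite-valued random variable `X` with respect to a measure `μ`. -/
noncomputable def shannonEntropy {Ω S : Type*} [MeasurableSpace Ω] [Fintype S]
    (μ : Measure Ω) (X : Ω → S) : ℝ :=
  ∑ s : S, Real.negMulLog ((μ (X ⁻¹' {s})).toReal)

/-- The conditional Shannon entropy `H[X | Y] = H[⟨X, Y⟩] - H[Y]`. -/
noncomputable def shannonCondEntropy {Ω S T : Type*} [MeasurableSpace Ω] [Fintype S] [Fintype T]
    (μ : Measure Ω) (X : Ω → S) (Y : Ω → T) : ℝ :=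
  shannonEntropy μ (fun ω => (X ω, Y ω)) - shannonEntropy μ Y

/-- The family of the three codomain types of `M0, M1, M2`, indexed by `Fin 3`. -/
def tripleType (A B C : Type u) : Fin 3 → Type u
  | 0 => A
  | 1 => B
  | 2 => C

/-- The family of the three random variables `M0, M1, M2`, indexed by `Fin 3`. -/
def tripleFun {Ω : Type*} {A B C : Type u} (f : Ω → A) (g : Ω → B) (h : Ω → C) :
    ∀ i : Fin 3, Ω → tripleType A B C i
  | 0 => f
  | 1 => g
  | 2 => h

/-- The family of the measurable space structures on the codomains of `M0, M1, M2`. -/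
def tripleMeas {A B C : Type u} (mA : MeasurableSpace A) (mB : MeasurableSpace B)
    (mC : MeasurableSpace C) : ∀ i : Fin 3, MeasurableSpace (tripleType A B C i)
  | 0 => mA
  | 1 => mB
  | 2 => mC

section Helpers


lemma pointwise_bound' {q Qt Qu Q : ℝ} (hq : 0 ≤ q) (hQt : q ≤ Qt) (hQu : q ≤ Qu)
    (hQtQ : Qt ≤ Q) (hQu' : 0 ≤ Qu) (hQt' : 0 ≤ Qt) :
    q * (Real.log Qt + Real.log Qu - Real.log q - Real.log Q) ≤ Qt * Qu / Q - q := by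
  have hQ' : 0 ≤ Q := le_trans hQt' hQtQ
  rcases eq_or_lt_of_le hq with h0 | hpos
  · rw [← h0]
    simp only [zero_mul, sub_zero]
    exact div_nonneg (mul_nonneg hQt' hQu') hQ'
  · have hQtpos : 0 < Qt := lt_of_lt_of_le hpos hQt
    have hQupos : 0 < Qu := lt_of_lt_of_le hpos hQu
    have hQpos : 0 < Q := lt_of_lt_of_le hQtpos hQtQ
    have hx : (0:ℝ) < Qt * Qu / (q * Q) := by positivity
    have hlog : Real.log Qt + Real.log Qu - Real.log q - Real.log Q
        = Real.log (Qt * Qu / (q * Q)) := by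
      rw [Real.log_div (by positivity) (by positivity), Real.log_mul hQtpos.ne' hQupos.ne',
        Real.log_mul hpos.ne' hQpos.ne']
      ring
    rw [hlog]
    have := Real.log_le_sub_one_of_pos hx
    calc q * Real.log (Qt * Qu / (q * Q)) ≤ q * (Qt * Qu / (q * Q) - 1) :=
          mul_le_mul_of_nonneg_left this hq
      _ = Qt * Qu / Q - q := by field_simp

lemma mutual_info_aux' {T U : Type*} [Fintype T] [Fintype U] (q : T → U → ℝ)
    (hq : ∀ t u, 0 ≤ q t u) :
    (∑ t, ∑ u, Real.negMulLog (q t u)) + Real.negMulLog (∑ t, ∑ u, q t u) ≤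
    (∑ t, Real.negMulLog (∑ u, q t u)) + ∑ u, Real.negMulLog (∑ t, q t u) := by
  set Qt : T → ℝ := fun t => ∑ u, q t u with hQt
  set Qu : U → ℝ := fun u => ∑ t, q t u with hQu
  set Q : ℝ := ∑ t, ∑ u, q t u with hQ
  have hQtnn : ∀ t, 0 ≤ Qt t := fun t => Finset.sum_nonneg fun u _ => hq t u
  have hQunn : ∀ u, 0 ≤ Qu u := fun u => Finset.sum_nonneg fun t _ => hq t u
  have hqQt : ∀ t u, q t u ≤ Qt t := fun t u =>
    Finset.single_le_sum (fun u' _ => hq t u') (Finset.mem_univ u)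
  have hqQu : ∀ t u, q t u ≤ Qu u := fun t u =>
    Finset.single_le_sum (fun t' _ => hq t' u) (Finset.mem_univ t)
  have hQtQ : ∀ t, Qt t ≤ Q := fun t =>
    Finset.single_le_sum (fun t' _ => hQtnn t') (Finset.mem_univ t)
  have hQtsum : ∑ t, Qt t = Q := rfl
  have hQusum : ∑ u, Qu u = Q := Finset.sum_comm.symm
  have key : ∀ t u, q t u * (Real.log (Qt t) + Real.log (Qu u) - Real.log (q t u)
      - Real.log Q) ≤ Qt t * Qu u / Q - q t u :=
    fun t u => pointwise_bound' (hq t u) (hqQt t u) (hqQu t u) (hQtQ t) (hQunn u) (hQtnn t)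
  have hsum : ∑ t, ∑ u, (q t u * (Real.log (Qt t) + Real.log (Qu u) - Real.log (q t u)
      - Real.log Q)) ≤ ∑ t, ∑ u, (Qt t * Qu u / Q - q t u) :=
    Finset.sum_le_sum fun t _ => Finset.sum_le_sum fun u _ => key t u
  have hrhs : ∑ t, ∑ u, (Qt t * Qu u / Q - q t u) = 0 := by
    have h1 : ∑ t, ∑ u, (Qt t * Qu u / Q) = Q * (Q / Q) := by
      simp_rw [mul_div_assoc]
      rw [← Finset.sum_mul_sum, ← Finset.sum_div, hQtsum, hQusum]
    have h2 : ∑ t, ∑ u, (Qt t * Qu u / Q - q t u)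
        = (∑ t, ∑ u, (Qt t * Qu u / Q)) - ∑ t, ∑ u, q t u := by
      simp [Finset.sum_sub_distrib]
    rw [h2, h1, ← hQ]
    rcases eq_or_ne Q 0 with h | h
    · simp [h]
    · rw [div_self h, mul_one, sub_self]
  have hL1 : ∑ t, ∑ u, q t u * Real.log (Qt t) = ∑ t, Qt t * Real.log (Qt t) :=
    Finset.sum_congr rfl fun t _ => by rw [← Finset.sum_mul]
  have hL2 : ∑ t, ∑ u, q t u * Real.log (Qu u) = ∑ u, Qu u * Real.log (Qu u) := by
    rw [Finset.sum_comm]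
    exact Finset.sum_congr rfl fun u _ => by rw [← Finset.sum_mul]
  have hL4 : ∑ t, ∑ u, q t u * Real.log Q = Q * Real.log Q := by
    simp_rw [← Finset.sum_mul]
    rfl
  have expand : ∑ t, ∑ u, (q t u * (Real.log (Qt t) + Real.log (Qu u) - Real.log (q t u)
      - Real.log Q))
      = (∑ t, Qt t * Real.log (Qt t)) + (∑ u, Qu u * Real.log (Qu u))
        - (∑ t, ∑ u, q t u * Real.log (q t u)) - Q * Real.log Q := by
    simp only [mul_sub, mul_add, Finset.sum_sub_distrib, Finset.sum_add_distrib]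
    rw [hL1, hL2, hL4]
  have main : (∑ t, Qt t * Real.log (Qt t)) + (∑ u, Qu u * Real.log (Qu u))
      ≤ (∑ t, ∑ u, q t u * Real.log (q t u)) + Q * Real.log Q := by
    rw [hrhs] at hsum; rw [expand] at hsum; linarith
  simp only [Real.negMulLog, neg_mul, Finset.sum_neg_distrib]
  linarith

/-- Generalized submodularity of `negMulLog` sums, grouped per first coordinate. -/
lemma submod_aux {S T U : Type*} [Fintype S] [Fintype T] [Fintype U] (p : S → T → U → ℝ)
    (hp : ∀ s t u, 0 ≤ p s t u) :
    (∑ s, ∑ t, ∑ u, Real.negMulLog (p s t u)) + ∑ s, Real.negMulLog (∑ t, ∑ u, p s t u) ≤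
    (∑ s, ∑ t, Real.negMulLog (∑ u, p s t u)) +
      ∑ s, ∑ u, Real.negMulLog (∑ t, p s t u) := by
  rw [← Finset.sum_add_distrib, ← Finset.sum_add_distrib]
  exact Finset.sum_le_sum fun s _ => mutual_info_aux' (p s) (hp s)


end Helpers

section MeasureHelpers


lemma toReal_meas_preimage_sum {Ω A B : Type*} [MeasurableSpace Ω] (μ : Measure Ω)
    [IsFiniteMeasure μ] [Fintype B] (Z : Ω → A) (V : Ω → B)
    (hZV : ∀ (a : A) (b : B), MeasurableSet ((fun ω => (Z ω, V ω)) ⁻¹' {(a, b)})) (a : A) :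
    (μ (Z ⁻¹' {a})).toReal = ∑ b : B, (μ ((fun ω => (Z ω, V ω)) ⁻¹' {(a, b)})).toReal := by
  have h1 : Z ⁻¹' {a} = ⋃ b ∈ (Finset.univ : Finset B), ((fun ω => (Z ω, V ω)) ⁻¹' {(a, b)}) := by
    ext ω
    simp [Prod.ext_iff]
  have h2 : μ (Z ⁻¹' {a}) = ∑ b : B, μ ((fun ω => (Z ω, V ω)) ⁻¹' {(a, b)}) := by
    rw [h1, measure_biUnion_finset]
    · intro b _ b' _ hbb'
      apply Set.disjoint_left.2
      intro ω h h'
      simp only [Set.mem_preimage, Set.mem_singleton_iff, Prod.ext_iff] at h h'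
      exact hbb' (h.2.symm.trans h'.2)
    · exact fun b _ => hZV a b
  rw [h2, ENNReal.toReal_sum (fun b _ => measure_ne_top μ _)]

lemma sum_toReal_meas_preimage {Ω A : Type*} [MeasurableSpace Ω] (μ : Measure Ω)
    [IsProbabilityMeasure μ] [Fintype A] (Z : Ω → A)
    (hZ : ∀ a : A, MeasurableSet (Z ⁻¹' {a})) :
    ∑ a : A, (μ (Z ⁻¹' {a})).toReal = 1 := by
  have h1 : (Set.univ : Set Ω) = ⋃ a ∈ (Finset.univ : Finset A), Z ⁻¹' {a} := by
    ext ω; simp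
  have h2 : (1 : ENNReal) = ∑ a : A, μ (Z ⁻¹' {a}) := by
    rw [← measure_univ (μ := μ), h1, measure_biUnion_finset]
    · intro a _ a' _ haa'
      apply Set.disjoint_left.2
      intro ω h h'
      simp only [Set.mem_preimage, Set.mem_singleton_iff] at h h'
      exact haa' (h.symm.trans h')
    · exact fun a _ => hZ a
  have := congrArg ENNReal.toReal h2
  rw [ENNReal.toReal_sum (fun a _ => measure_ne_top μ _)] at this
  simpa using this.symm

lemma shannonEntropy_comp_equiv {Ω S S' : Type*} [MeasurableSpace Ω] [Fintype S] [Fintype S']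
    (μ : Measure Ω) (X : Ω → S) (e : S ≃ S') :
    shannonEntropy μ (fun ω => e (X ω)) = shannonEntropy μ X := by
  unfold shannonEntropy
  rw [← e.sum_comp (fun s' => Real.negMulLog ((μ ((fun ω => e (X ω)) ⁻¹' {s'})).toReal))]
  refine Finset.sum_congr rfl fun s _ => ?_
  have hset : (fun ω => e (X ω)) ⁻¹' {e s} = X ⁻¹' {s} := by
    ext ω; simp
  rw [hset]

lemma shannonEntropy_pair_of_indep {Ω A B : Type*} [MeasurableSpace Ω] [Fintype A] [Fintype B]
    (μ : Measure Ω) [IsProbabilityMeasure μ] (X : Ω → A) (Y : Ω → B)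
    (hX : ∀ a, MeasurableSet (X ⁻¹' {a})) (hY : ∀ b, MeasurableSet (Y ⁻¹' {b}))
    (h : ∀ a b, μ ((fun ω => (X ω, Y ω)) ⁻¹' {(a, b)}) = μ (X ⁻¹' {a}) * μ (Y ⁻¹' {b})) :
    shannonEntropy μ (fun ω => (X ω, Y ω)) = shannonEntropy μ X + shannonEntropy μ Y := by
  unfold shannonEntropy
  rw [Fintype.sum_prod_type]
  have : ∀ (a : A) (b : B), Real.negMulLog ((μ ((fun ω => (X ω, Y ω)) ⁻¹' {(a, b)})).toReal)
      = (μ (Y ⁻¹' {b})).toReal * Real.negMulLog ((μ (X ⁻¹' {a})).toReal)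
        + (μ (X ⁻¹' {a})).toReal * Real.negMulLog ((μ (Y ⁻¹' {b})).toReal) := by
    intro a b
    rw [h a b, ENNReal.toReal_mul, Real.negMulLog_mul]
  simp_rw [this]
  simp only [Finset.sum_add_distrib]
  have e1 : ∑ a : A, ∑ b : B, (μ (Y ⁻¹' {b})).toReal
        * Real.negMulLog ((μ (X ⁻¹' {a})).toReal)
      = ∑ a : A, Real.negMulLog ((μ (X ⁻¹' {a})).toReal) := by
    refine Finset.sum_congr rfl fun a _ => ?_
    rw [← Finset.sum_mul, sum_toReal_meas_preimage μ Y hY, one_mul]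
  have e2 : ∑ a : A, ∑ b : B, (μ (X ⁻¹' {a})).toReal
        * Real.negMulLog ((μ (Y ⁻¹' {b})).toReal)
      = ∑ b : B, Real.negMulLog ((μ (Y ⁻¹' {b})).toReal) := by
    rw [Finset.sum_comm]
    refine Finset.sum_congr rfl fun b _ => ?_
    rw [← Finset.sum_mul, sum_toReal_meas_preimage μ X hX, one_mul]
  rw [e1, e2]


end MeasureHelpers

lemma indep_prod {Ω : Type*} [MeasurableSpace Ω] (μ : Measure Ω) [IsProbabilityMeasure μ]
    {SM0 SM1 SM2 : Type u}
    [mSM0 : MeasurableSpace SM0] [mSM1 : MeasurableSpace SM1] [mSM2 : MeasurableSpace SM2]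
    (M0 : Ω → SM0) (M1 : Ω → SM1) (M2 : Ω → SM2)
    (hindep : iIndepFun (m := tripleMeas mSM0 mSM1 mSM2) (tripleFun M0 M1 M2) μ)
    (sa : Set SM0) (sb : Set SM1) (sc : Set SM2)
    (ha : MeasurableSet sa) (hb : MeasurableSet sb) (hc : MeasurableSet sc) :
    μ (M0 ⁻¹' sa ∩ M1 ⁻¹' sb ∩ M2 ⁻¹' sc)
      = μ (M0 ⁻¹' sa) * μ (M1 ⁻¹' sb) * μ (M2 ⁻¹' sc) := by
  set st : Fin 3 → Set Ω := ![M0 ⁻¹' sa, M1 ⁻¹' sb, M2 ⁻¹' sc] with hst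
  have hs : ∀ i, MeasurableSet[(tripleMeas mSM0 mSM1 mSM2 i).comap (tripleFun M0 M1 M2 i)]
      (st i) := by
    intro i
    fin_cases i
    · exact ⟨sa, ha, rfl⟩
    · exact ⟨sb, hb, rfl⟩
    · exact ⟨sc, hc, rfl⟩
  have key := hindep.meas_iInter hs
  have h3 : (⋂ i, st i) = M0 ⁻¹' sa ∩ M1 ⁻¹' sb ∩ M2 ⁻¹' sc := by
    ext ω
    simp only [Set.mem_iInter, Set.mem_inter_iff, hst]
    constructor
    · intro h
      exact ⟨⟨h 0, h 1⟩, h 2⟩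
    · rintro ⟨⟨h0, h1⟩, h2⟩ i
      fin_cases i <;> assumption
  rw [h3, Fin.prod_univ_three] at key
  simpa [hst] using key


/-- Proposition 3 of the paper: a generalization of the sub-modularity of entropy.
If `M0, M1, M2` are mutually independent, then
`H[⟨Y0,Y1⟩ | ⟨M0,M1⟩] + H[⟨Y0,Y2⟩ | ⟨M0,M2⟩]
  ≥ H[⟨Y0,Y1,Y2⟩ | ⟨M0,M1,M2⟩] + H[Y0 | M0]`. -/
theorem generalized_submodularity {Ω : Type*} [MeasurableSpace Ω]
    (μ : Measure Ω) [IsProbabilityMeasure μ]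
    {SY0 SY1 SY2 : Type*} {SM0 SM1 SM2 : Type u}
    [Fintype SY0] [Fintype SY1] [Fintype SY2] [Fintype SM0] [Fintype SM1] [Fintype SM2]
    [MeasurableSpace SY0] [MeasurableSpace SY1] [MeasurableSpace SY2]
    [mSM0 : MeasurableSpace SM0] [mSM1 : MeasurableSpace SM1] [mSM2 : MeasurableSpace SM2]
    [MeasurableSingletonClass SY0] [MeasurableSingletonClass SY1] [MeasurableSingletonClass SY2]
    [MeasurableSingletonClass SM0] [MeasurableSingletonClass SM1] [MeasurableSingletonClass SM2]
    (Y0 : Ω → SY0) (Y1 : Ω → SY1) (Y2 : Ω → SY2)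
    (M0 : Ω → SM0) (M1 : Ω → SM1) (M2 : Ω → SM2)
    (hY0 : Measurable Y0) (hY1 : Measurable Y1) (hY2 : Measurable Y2)
    (hM0 : Measurable M0) (hM1 : Measurable M1) (hM2 : Measurable M2)
    (hindep : iIndepFun (m := tripleMeas mSM0 mSM1 mSM2) (tripleFun M0 M1 M2) μ) :
    shannonCondEntropy μ (fun ω => (Y0 ω, Y1 ω)) (fun ω => (M0 ω, M1 ω)) +
      shannonCondEntropy μ (fun ω => (Y0 ω, Y2 ω)) (fun ω => (M0 ω, M2 ω)) ≥
    shannonCondEntropy μ (fun ω => (Y0 ω, Y1 ω, Y2 ω)) (fun ω => (M0 ω, M1 ω, M2 ω)) +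
      shannonCondEntropy μ Y0 M0 := by
  classical
  -- the three grouped variables
  set A : Ω → SY0 × SM0 := fun ω => (Y0 ω, M0 ω) with hA_def
  set B : Ω → SY1 × SM1 := fun ω => (Y1 ω, M1 ω) with hB_def
  set C : Ω → SY2 × SM2 := fun ω => (Y2 ω, M2 ω) with hC_def
  have hA : Measurable A := hY0.prodMk hM0
  have hB : Measurable B := hY1.prodMk hM1
  have hC : Measurable C := hY2.prodMk hM2
  set W : Ω → (SY0 × SM0) × (SY1 × SM1) × (SY2 × SM2) := fun ω => (A ω, B ω, C ω) with hW_def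
  have hW : Measurable W := hA.prodMk (hB.prodMk hC)
  set p : (SY0 × SM0) → (SY1 × SM1) → (SY2 × SM2) → ℝ :=
    fun s t u => (μ (W ⁻¹' {(s, t, u)})).toReal with hp_def
  have hpnn : ∀ s t u, 0 ≤ p s t u := fun s t u => ENNReal.toReal_nonneg
  -- marginal identities
  have m12 : ∀ s t, ∑ u, p s t u = (μ ((fun ω => (A ω, B ω)) ⁻¹' {(s, t)})).toReal := by
    intro s t
    rw [toReal_meas_preimage_sum μ (fun ω => (A ω, B ω)) C
      (fun x y => ((hA.prodMk hB).prodMk hC) (measurableSet_singleton (x, y))) (s, t)]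
    refine Finset.sum_congr rfl fun u _ => congrArg ENNReal.toReal (congrArg μ ?_)
    ext ω
    simp only [Set.mem_preimage, Set.mem_singleton_iff, Prod.ext_iff, hW_def]
    tauto
  have m13 : ∀ s u, ∑ t, p s t u = (μ ((fun ω => (A ω, C ω)) ⁻¹' {(s, u)})).toReal := by
    intro s u
    rw [toReal_meas_preimage_sum μ (fun ω => (A ω, C ω)) B
      (fun x y => ((hA.prodMk hC).prodMk hB) (measurableSet_singleton (x, y))) (s, u)]
    refine Finset.sum_congr rfl fun t _ => congrArg ENNReal.toReal (congrArg μ ?_)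
    ext ω
    simp only [Set.mem_preimage, Set.mem_singleton_iff, Prod.ext_iff, hW_def]
    tauto
  have m1 : ∀ s, (μ (A ⁻¹' {s})).toReal = ∑ t, ∑ u, p s t u := by
    intro s
    rw [toReal_meas_preimage_sum μ A (fun ω => (B ω, C ω))
      (fun x y => (hA.prodMk (hB.prodMk hC)) (measurableSet_singleton (x, y))) s,
      Fintype.sum_prod_type]
  -- the submodularity inequality in entropy terms
  have hsub := submod_aux p hpnn
  -- identify the four sums with entropies
  have hE_C : shannonEntropy μ W = ∑ s, ∑ t, ∑ u, Real.negMulLog (p s t u) := by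
    unfold shannonEntropy
    rw [Fintype.sum_prod_type]
    refine Finset.sum_congr rfl fun s _ => ?_
    rw [Fintype.sum_prod_type]
  have hE_D : shannonEntropy μ A = ∑ s, Real.negMulLog (∑ t, ∑ u, p s t u) := by
    unfold shannonEntropy
    refine Finset.sum_congr rfl fun s _ => ?_
    rw [m1 s]
  have hE_A : shannonEntropy μ (fun ω => (A ω, B ω))
      = ∑ s, ∑ t, Real.negMulLog (∑ u, p s t u) := by
    unfold shannonEntropy
    rw [Fintype.sum_prod_type]
    refine Finset.sum_congr rfl fun s _ => Finset.sum_congr rfl fun t _ => ?_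
    rw [m12 s t]
  have hE_B : shannonEntropy μ (fun ω => (A ω, C ω))
      = ∑ s, ∑ u, Real.negMulLog (∑ t, p s t u) := by
    unfold shannonEntropy
    rw [Fintype.sum_prod_type]
    refine Finset.sum_congr rfl fun s _ => Finset.sum_congr rfl fun u _ => ?_
    rw [m13 s u]
  rw [← hE_A, ← hE_B, ← hE_C, ← hE_D] at hsub
  -- re-group the entropies appearing in the goal
  have eq_A : shannonEntropy μ (fun ω => ((Y0 ω, Y1 ω), (M0 ω, M1 ω)))
      = shannonEntropy μ (fun ω => (A ω, B ω)) := by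
    exact shannonEntropy_comp_equiv μ (fun ω => (A ω, B ω))
      ⟨fun x => ((x.1.1, x.2.1), (x.1.2, x.2.2)),
       fun x => ((x.1.1, x.2.1), (x.1.2, x.2.2)), fun x => rfl, fun x => rfl⟩
  have eq_B : shannonEntropy μ (fun ω => ((Y0 ω, Y2 ω), (M0 ω, M2 ω)))
      = shannonEntropy μ (fun ω => (A ω, C ω)) := by
    exact shannonEntropy_comp_equiv μ (fun ω => (A ω, C ω))
      ⟨fun x => ((x.1.1, x.2.1), (x.1.2, x.2.2)),
       fun x => ((x.1.1, x.2.1), (x.1.2, x.2.2)), fun x => rfl, fun x => rfl⟩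
  have eq_C : shannonEntropy μ (fun ω => ((Y0 ω, Y1 ω, Y2 ω), (M0 ω, M1 ω, M2 ω)))
      = shannonEntropy μ W := by
    exact shannonEntropy_comp_equiv μ W
      ⟨fun x => ((x.1.1, x.2.1.1, x.2.2.1), (x.1.2, x.2.1.2, x.2.2.2)),
       fun y => ((y.1.1, y.2.1), ((y.1.2.1, y.2.2.1), (y.1.2.2, y.2.2.2))),
       fun x => rfl, fun y => rfl⟩
  -- independence consequences
  have hprod := indep_prod μ M0 M1 M2 hindep
  have hM0s : ∀ a, MeasurableSet (M0 ⁻¹' {a}) := fun a => hM0 (measurableSet_singleton a)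
  have hM1s : ∀ b, MeasurableSet (M1 ⁻¹' {b}) := fun b => hM1 (measurableSet_singleton b)
  have hM2s : ∀ c, MeasurableSet (M2 ⁻¹' {c}) := fun c => hM2 (measurableSet_singleton c)
  have hM12s : ∀ x : SM1 × SM2, MeasurableSet ((fun ω => (M1 ω, M2 ω)) ⁻¹' {x}) :=
    fun x => (hM1.prodMk hM2) (measurableSet_singleton x)
  have hpair01 : ∀ a b, μ ((fun ω => (M0 ω, M1 ω)) ⁻¹' {(a, b)})
      = μ (M0 ⁻¹' {a}) * μ (M1 ⁻¹' {b}) := by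
    intro a b
    have h := hprod {a} {b} Set.univ (measurableSet_singleton a) (measurableSet_singleton b)
      MeasurableSet.univ
    simp only [Set.preimage_univ, Set.inter_univ, measure_univ, mul_one] at h
    rw [← h]
    congr 1
    ext ω
    simp [Prod.ext_iff]
  have hpair02 : ∀ a c, μ ((fun ω => (M0 ω, M2 ω)) ⁻¹' {(a, c)})
      = μ (M0 ⁻¹' {a}) * μ (M2 ⁻¹' {c}) := by
    intro a c
    have h := hprod {a} Set.univ {c} (measurableSet_singleton a) MeasurableSet.univ
      (measurableSet_singleton c)
    simp only [Set.preimage_univ, Set.inter_univ, measure_univ, mul_one, Set.univ_inter] at h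
    rw [← h]
    exact congrArg μ (by ext ω; simp [Prod.ext_iff])
  have hpair12 : ∀ b c, μ ((fun ω => (M1 ω, M2 ω)) ⁻¹' {(b, c)})
      = μ (M1 ⁻¹' {b}) * μ (M2 ⁻¹' {c}) := by
    intro b c
    have h := hprod Set.univ {b} {c} MeasurableSet.univ (measurableSet_singleton b)
      (measurableSet_singleton c)
    simp only [Set.preimage_univ, Set.univ_inter, measure_univ, one_mul] at h
    rw [← h]
    congr 1
    ext ω
    simp [Prod.ext_iff]
  have hpair0_12 : ∀ (a : SM0) (x : SM1 × SM2),
      μ ((fun ω => (M0 ω, (M1 ω, M2 ω))) ⁻¹' {(a, x)})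
      = μ (M0 ⁻¹' {a}) * μ ((fun ω => (M1 ω, M2 ω)) ⁻¹' {x}) := by
    rintro a ⟨b, c⟩
    have h := hprod {a} {b} {c} (measurableSet_singleton a) (measurableSet_singleton b)
      (measurableSet_singleton c)
    rw [hpair12 b c, ← mul_assoc, ← h]
    have hset : (fun ω => (M0 ω, (M1 ω, M2 ω))) ⁻¹' {(a, (b, c))}
        = M0 ⁻¹' {a} ∩ M1 ⁻¹' {b} ∩ M2 ⁻¹' {c} := by
      ext ω
      simp [Prod.ext_iff]
      tauto
    rw [hset]
  have hM01 : shannonEntropy μ (fun ω => (M0 ω, M1 ω))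
      = shannonEntropy μ M0 + shannonEntropy μ M1 :=
    shannonEntropy_pair_of_indep μ M0 M1 hM0s hM1s hpair01
  have hM02 : shannonEntropy μ (fun ω => (M0 ω, M2 ω))
      = shannonEntropy μ M0 + shannonEntropy μ M2 :=
    shannonEntropy_pair_of_indep μ M0 M2 hM0s hM2s hpair02
  have hM12 : shannonEntropy μ (fun ω => (M1 ω, M2 ω))
      = shannonEntropy μ M1 + shannonEntropy μ M2 :=
    shannonEntropy_pair_of_indep μ M1 M2 hM1s hM2s hpair12
  have hM012 : shannonEntropy μ (fun ω => (M0 ω, M1 ω, M2 ω))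
      = shannonEntropy μ M0 + (shannonEntropy μ M1 + shannonEntropy μ M2) := by
    rw [← hM12]
    exact shannonEntropy_pair_of_indep μ M0 (fun ω => (M1 ω, M2 ω)) hM0s hM12s hpair0_12
  -- put everything together
  simp only [shannonCondEntropy, ge_iff_le]
  rw [eq_A, eq_B, eq_C, hM01, hM02, hM012, ← hA_def]
  linarith [hsub]
end

section
/- Let Y1, Y2, M0, M1, M2 be finite-valued measurable random variables on a probability space, and suppose M0, M1, M2 are mutually independent. Then I[Y1;Y2 | ⟨M0,M1,M2⟩] + I[Y1;M2 | ⟨M0,M1⟩] + I[Y2;M1 | ⟨M0,M2⟩] = I[⟨Y1,M1⟩;⟨Y2,M2⟩ | M0]. (This is the key identity established in the proof of Proposition 3 of the paper.) -/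
open MeasureTheory ProbabilityTheory

/-- The conditional mutual information
`I[X ; Y | Z] = H[⟨X,Z⟩] + H[⟨Y,Z⟩] - H[⟨X,Y,Z⟩] - H[Z]`. -/
noncomputable def shannonCondMutualInfo {Ω S T U : Type*} [MeasurableSpace Ω]
    [Fintype S] [Fintype T] [Fintype U]
    (μ : Measure Ω) (X : Ω → S) (Y : Ω → T) (Z : Ω → U) : ℝ :=
  shannonEntropy μ (fun ω => (X ω, Z ω)) + shannonEntropy μ (fun ω => (Y ω, Z ω)) -
    shannonEntropy μ (fun ω => (X ω, Y ω, Z ω)) - shannonEntropy μ Z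

lemma shannonEntropy_congr {Ω S T : Type*} [MeasurableSpace Ω] [Fintype S] [Fintype T]
    (μ : Measure Ω) (X : Ω → S) (Y : Ω → T) (e : S ≃ T) (hXY : ∀ ω, Y ω = e (X ω)) :
    shannonEntropy μ Y = shannonEntropy μ X := by
  unfold shannonEntropy
  refine (Fintype.sum_equiv e _ _ fun s => ?_).symm
  have : Y ⁻¹' {e s} = X ⁻¹' {s} := by
    ext ω; simp [hXY, e.injective.eq_iff]
  rw [this]

lemma sum_toReal_preimage {Ω S : Type*} [MeasurableSpace Ω] [Fintype S]
    [MeasurableSpace S] [MeasurableSingletonClass S]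
    (μ : Measure Ω) [IsProbabilityMeasure μ] {X : Ω → S} (hX : Measurable X) :
    ∑ s : S, ((μ (X ⁻¹' {s})).toReal) = 1 := by
  rw [← ENNReal.toReal_sum (fun _ _ => measure_ne_top μ _)]
  rw [sum_measure_preimage_singleton _ (fun y _ => hX (measurableSet_singleton y))]
  simp

lemma shannonEntropy_pair_eq_add {Ω S T : Type*} [MeasurableSpace Ω] [Fintype S] [Fintype T]
    [MeasurableSpace S] [MeasurableSpace T] [MeasurableSingletonClass S]
    [MeasurableSingletonClass T]
    (μ : Measure Ω) [IsProbabilityMeasure μ] {X : Ω → S} {Y : Ω → T}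
    (hX : Measurable X) (hY : Measurable Y) (h : IndepFun X Y μ) :
    shannonEntropy μ (fun ω => (X ω, Y ω)) = shannonEntropy μ X + shannonEntropy μ Y := by
  unfold shannonEntropy
  rw [Fintype.sum_prod_type]
  have key : ∀ s t, ((μ ((fun ω => (X ω, Y ω)) ⁻¹' {(s, t)})).toReal)
      = (μ (X ⁻¹' {s})).toReal * (μ (Y ⁻¹' {t})).toReal := by
    intro s t
    have hpre : (fun ω => (X ω, Y ω)) ⁻¹' {(s, t)} = X ⁻¹' {s} ∩ Y ⁻¹' {t} := by
      ext ω; simp [Prod.ext_iff]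
    rw [hpre, h.measure_inter_preimage_eq_mul _ _ (measurableSet_singleton s)
      (measurableSet_singleton t), ENNReal.toReal_mul]
  simp only [key, Real.negMulLog_mul]
  rw [Finset.sum_comm]
  simp only [Finset.sum_add_distrib, ← Finset.sum_mul, ← Finset.mul_sum]
  rw [sum_toReal_preimage μ hX, sum_toReal_preimage μ hY]
  ring

/-- The key identity in the proof of Proposition 3 of the paper: if `M0, M1, M2` are mutually
independent, then
`I[Y1;Y2 | ⟨M0,M1,M2⟩] + I[Y1;M2 | ⟨M0,M1⟩] + I[Y2;M1 | ⟨M0,M2⟩]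
  = I[⟨Y1,M1⟩;⟨Y2,M2⟩ | M0]`. -/
theorem mutualInfo_identity {Ω : Type*} [MeasurableSpace Ω]
    (μ : Measure Ω) [IsProbabilityMeasure μ]
    {SY1 SY2 : Type*} {SM0 SM1 SM2 : Type u}
    [Fintype SY1] [Fintype SY2] [Fintype SM0] [Fintype SM1] [Fintype SM2]
    [MeasurableSpace SY1] [MeasurableSpace SY2]
    [mSM0 : MeasurableSpace SM0] [mSM1 : MeasurableSpace SM1] [mSM2 : MeasurableSpace SM2]
    [MeasurableSingletonClass SY1] [MeasurableSingletonClass SY2]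
    [MeasurableSingletonClass SM0] [MeasurableSingletonClass SM1] [MeasurableSingletonClass SM2]
    (Y1 : Ω → SY1) (Y2 : Ω → SY2)
    (M0 : Ω → SM0) (M1 : Ω → SM1) (M2 : Ω → SM2)
    (hY1 : Measurable Y1) (hY2 : Measurable Y2)
    (hM0 : Measurable M0) (hM1 : Measurable M1) (hM2 : Measurable M2)
    (hindep : iIndepFun (m := tripleMeas mSM0 mSM1 mSM2) (tripleFun M0 M1 M2) μ) :
    shannonCondMutualInfo μ Y1 Y2 (fun ω => (M0 ω, M1 ω, M2 ω)) +
      shannonCondMutualInfo μ Y1 M2 (fun ω => (M0 ω, M1 ω)) +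
      shannonCondMutualInfo μ Y2 M1 (fun ω => (M0 ω, M2 ω)) =
    shannonCondMutualInfo μ (fun ω => (Y1 ω, M1 ω)) (fun ω => (Y2 ω, M2 ω)) M0 := by

  have hmeas : ∀ i, @Measurable _ _ _ (tripleMeas mSM0 mSM1 mSM2 i) (tripleFun M0 M1 M2 i) := by
    intro i
    fin_cases i
    · exact hM0
    · exact hM1
    · exact hM2
  have hI01 : IndepFun M0 M1 μ := hindep.indepFun (i := 0) (j := 1) (by decide)
  have hI02 : IndepFun M0 M2 μ := hindep.indepFun (i := 0) (j := 2) (by decide)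
  have hI012 : IndepFun (fun ω => (M0 ω, M1 ω)) M2 μ :=
    hindep.indepFun_prodMk hmeas 0 1 2 (by decide) (by decide)
  have E1 : shannonEntropy μ (fun ω => (M0 ω, M1 ω))
      = shannonEntropy μ M0 + shannonEntropy μ M1 :=
    shannonEntropy_pair_eq_add μ hM0 hM1 hI01
  have E2 : shannonEntropy μ (fun ω => (M0 ω, M2 ω))
      = shannonEntropy μ M0 + shannonEntropy μ M2 :=
    shannonEntropy_pair_eq_add μ hM0 hM2 hI02
  have E3 : shannonEntropy μ (fun ω => ((M0 ω, M1 ω), M2 ω))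
      = shannonEntropy μ (fun ω => (M0 ω, M1 ω)) + shannonEntropy μ M2 :=
    shannonEntropy_pair_eq_add μ (hM0.prodMk hM1) hM2 hI012
  have E4 : shannonEntropy μ (fun ω => ((M0 ω, M1 ω), M2 ω))
      = shannonEntropy μ (fun ω => (M0 ω, M1 ω, M2 ω)) :=
    shannonEntropy_congr μ _ _
      ⟨fun p => ((p.1, p.2.1), p.2.2), fun q => (q.1.1, q.1.2, q.2),
        fun p => rfl, fun q => rfl⟩ (fun ω => rfl)
  have h1 : shannonEntropy μ (fun ω => (M2 ω, M0 ω, M1 ω))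
      = shannonEntropy μ (fun ω => (M0 ω, M1 ω, M2 ω)) :=
    shannonEntropy_congr μ _ _
      ⟨fun p => (p.2.2, p.1, p.2.1), fun q => (q.2.1, q.2.2, q.1),
        fun p => rfl, fun q => rfl⟩ (fun ω => rfl)
  have h2 : shannonEntropy μ (fun ω => (Y1 ω, M2 ω, M0 ω, M1 ω))
      = shannonEntropy μ (fun ω => (Y1 ω, M0 ω, M1 ω, M2 ω)) :=
    shannonEntropy_congr μ _ _
      ⟨fun p => (p.1, p.2.2.2, p.2.1, p.2.2.1), fun q => (q.1, q.2.2.1, q.2.2.2, q.2.1),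
        fun p => rfl, fun q => rfl⟩ (fun ω => rfl)
  have h3 : shannonEntropy μ (fun ω => (M1 ω, M0 ω, M2 ω))
      = shannonEntropy μ (fun ω => (M0 ω, M1 ω, M2 ω)) :=
    shannonEntropy_congr μ _ _
      ⟨fun p => (p.2.1, p.1, p.2.2), fun q => (q.2.1, q.1, q.2.2),
        fun p => rfl, fun q => rfl⟩ (fun ω => rfl)
  have h4 : shannonEntropy μ (fun ω => (Y2 ω, M1 ω, M0 ω, M2 ω))
      = shannonEntropy μ (fun ω => (Y2 ω, M0 ω, M1 ω, M2 ω)) :=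
    shannonEntropy_congr μ _ _
      ⟨fun p => (p.1, p.2.2.1, p.2.1, p.2.2.2), fun q => (q.1, q.2.2.1, q.2.1, q.2.2.2),
        fun p => rfl, fun q => rfl⟩ (fun ω => rfl)
  have h5 : shannonEntropy μ (fun ω => ((Y1 ω, M1 ω), M0 ω))
      = shannonEntropy μ (fun ω => (Y1 ω, M0 ω, M1 ω)) :=
    shannonEntropy_congr μ _ _
      ⟨fun p => ((p.1, p.2.2), p.2.1), fun q => (q.1.1, q.2, q.1.2),
        fun p => rfl, fun q => rfl⟩ (fun ω => rfl)
  have h6 : shannonEntropy μ (fun ω => ((Y2 ω, M2 ω), M0 ω))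
      = shannonEntropy μ (fun ω => (Y2 ω, M0 ω, M2 ω)) :=
    shannonEntropy_congr μ _ _
      ⟨fun p => ((p.1, p.2.2), p.2.1), fun q => (q.1.1, q.2, q.1.2),
        fun p => rfl, fun q => rfl⟩ (fun ω => rfl)
  have h7 : shannonEntropy μ (fun ω => ((Y1 ω, M1 ω), (Y2 ω, M2 ω), M0 ω))
      = shannonEntropy μ (fun ω => (Y1 ω, Y2 ω, M0 ω, M1 ω, M2 ω)) :=
    shannonEntropy_congr μ _ _
      ⟨fun p => ((p.1, p.2.2.2.1), (p.2.1, p.2.2.2.2), p.2.2.1),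
        fun q => (q.1.1, q.2.1.1, q.2.2, q.1.2, q.2.1.2),
        fun p => rfl, fun q => rfl⟩ (fun ω => rfl)
  simp only [shannonCondMutualInfo]
  linarith [E1, E2, E3, E4, h1, h2, h3, h4, h5, h6, h7]
end

section
/- Let k be a positive integer and suppose 2k+1 = p^e for a prime p and positive integer e. Then the sum of any k distinct (2k+1)-th roots of unity is nonzero; that is, for every finite set S of complex numbers with z^(2k+1) = 1 for all z ∈ S and |S| = k, one has ∑_{z ∈ S} z ≠ 0. -/
open Polynomial

/-- Lemma 4 of the paper: if `2k+1 = p^e` is a prime power, then the sum of any `k`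
distinct `(2k+1)`-th roots of unity is nonzero. -/
theorem sum_distinct_roots_ne_zero_prime_pow (k p e : ℕ) (hk : 0 < k)
    (hp : Nat.Prime p) (he : 0 < e) (hpe : 2 * k + 1 = p ^ e)
    (S : Finset ℂ) (hS : ∀ z ∈ S, z ^ (2 * k + 1) = 1) (hcard : S.card = k) :
    ∑ z ∈ S, z ≠ 0 := by
  intro hsum
  haveI : Fact p.Prime := ⟨hp⟩
  set n := 2 * k + 1 with hn
  haveI : NeZero n := ⟨by omega⟩
  set ζ : ℂ := Complex.exp (2 * Real.pi * Complex.I / n) with hζdef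
  have hζ : IsPrimitiveRoot ζ n := Complex.isPrimitiveRoot_exp n (by omega)
  -- choose exponents
  have hexp : ∀ z ∈ S, ∃ i, ζ ^ i = z := by
    intro z hz
    obtain ⟨i, _, hi⟩ := hζ.eq_pow_of_pow_eq_one (hS z hz)
    exact ⟨i, hi⟩
  classical
  choose g hg using fun z (hz : z ∈ S) => hexp z hz
  -- the polynomial with these exponents
  set f : ℤ[X] := ∑ z ∈ S.attach, X ^ g z.1 z.2 with hf
  have hroot : aeval ζ f = 0 := by
    rw [hf, map_sum]
    simp only [map_pow, aeval_X]
    rw [show (∑ z ∈ S.attach, ζ ^ g z.1 z.2) = ∑ z ∈ S.attach, (z : ℂ) from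
      Finset.sum_congr rfl fun z _ => hg z.1 z.2]
    rw [Finset.sum_attach S (fun z => z), hsum]
  -- cyclotomic divides f over ℚ, hence over ℤ
  have hdvdQ : cyclotomic n ℚ ∣ f.map (Int.castRingHom ℚ) := by
    rw [cyclotomic_eq_minpoly_rat hζ (by omega)]
    apply minpoly.dvd
    rw [show Int.castRingHom ℚ = algebraMap ℤ ℚ from rfl, aeval_map_algebraMap]
    exact hroot
  have hdvdZ : cyclotomic n ℤ ∣ f := by
    rw [← map_dvd_map (Int.castRingHom ℚ) Int.cast_injective
      (cyclotomic.monic n ℤ), map_cyclotomic_int]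
    exact hdvdQ
  -- evaluate at 1
  have heval : f.eval 1 = (k : ℤ) := by
    rw [hf, eval_finset_sum]
    simp [hcard]
  have hcyc1 : (cyclotomic n ℤ).eval 1 = (p : ℤ) := by
    obtain ⟨e', rfl⟩ : ∃ e', e = e' + 1 := ⟨e - 1, by omega⟩
    rw [hpe]
    exact eval_one_cyclotomic_prime_pow e'
  obtain ⟨q, hq⟩ := hdvdZ
  have : (p : ℤ) ∣ (k : ℤ) := by
    rw [← heval, hq, eval_mul, hcyc1]
    exact Dvd.intro _ rfl
  have hpk : p ∣ k := by exact_mod_cast this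
  have hpn : p ∣ 2 * k + 1 := hn ▸ hpe ▸ dvd_pow_self p (by omega)
  have : p ∣ 1 := (Nat.dvd_add_right (Dvd.dvd.mul_left hpk 2)).mp hpn
  exact Nat.Prime.one_lt hp |>.ne' (Nat.dvd_one.mp this)
end

section
/- Let k be a positive integer and suppose 2k+1 = p·q for two distinct primes p and q. Then the sum of any k distinct (2k+1)-th roots of unity is nonzero; that is, for every finite set S of complex numbers with z^(2k+1) = 1 for all z ∈ S and |S| = k, one has ∑_{z ∈ S} z ≠ 0. -/
set_option maxHeartbeats 1000000

open Finset Polynomial IntermediateField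



lemma crt_inj (p q : ℕ) (hp : Nat.Prime p) (hq : Nat.Prime q) (hpq : p ≠ q)
    (i i' j j' : ℕ) (hi : i < p) (hi' : i' < p) (hj : j < q) (hj' : j' < q)
    (h : q * i + p * j ≡ q * i' + p * j' [MOD p * q]) : i = i' ∧ j = j' := by
  have hco : Nat.Coprime p q := (Nat.coprime_primes hp hq).mpr hpq
  have key : ∀ (a b : ℕ) (i i' : ℕ), i < a → i' < a → Nat.Coprime a b →
      b * i ≡ b * i' [MOD a] → i = i' := by
    intro a b i i' hi hi' hco' h
    have := (Nat.ModEq.cancel_left_of_coprime hco' h)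
    unfold Nat.ModEq at this
    rwa [Nat.mod_eq_of_lt hi, Nat.mod_eq_of_lt hi'] at this
  have cancel : ∀ (a b : ℕ) (i i' j j' : ℕ), b * i + a * j ≡ b * i' + a * j' [MOD a] →
      b * i ≡ b * i' [MOD a] := by
    intro a b i i' j j' h
    have h0 : ∀ j : ℕ, a * j ≡ 0 [MOD a] := fun j =>
      (Nat.modEq_zero_iff_dvd).mpr (dvd_mul_right a j)
    calc b * i ≡ b * i + a * j [MOD a] := ((h0 j).add_left _).symm
      _ ≡ b * i' + a * j' [MOD a] := h
      _ ≡ b * i' [MOD a] := (h0 j').add_left _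
  have hmp : q * i + p * j ≡ q * i' + p * j' [MOD p] :=
    Nat.ModEq.of_dvd (dvd_mul_right p q) h
  have hmq : q * i + p * j ≡ q * i' + p * j' [MOD q] :=
    Nat.ModEq.of_dvd (dvd_mul_left q p) h
  refine ⟨key p q i i' hi hi' hco (cancel p q i i' j j' hmp), ?_⟩
  refine key q p j j' hj hj' hco.symm (cancel q p j j' i i' ?_)
  rw [add_comm (q * i), add_comm (q * i')] at hmq
  exact hmq

lemma crt_exists (p q : ℕ) (hp : Nat.Prime p) (hq : Nat.Prime q) (hpq : p ≠ q) (m : ℕ) :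
    ∃ i < p, ∃ j < q, q * i + p * j ≡ m [MOD p * q] := by
  haveI : NeZero (p * q) := ⟨Nat.mul_ne_zero hp.ne_zero hq.ne_zero⟩
  set ψ : Fin p × Fin q → ZMod (p * q) := fun u => ((q * u.1 + p * u.2 : ℕ) : ZMod (p * q)) with hψ
  have hinj : Function.Injective ψ := by
    rintro ⟨i, j⟩ ⟨i', j'⟩ h
    simp only [hψ, ZMod.natCast_eq_natCast_iff] at h
    obtain ⟨h1, h2⟩ := crt_inj p q hp hq hpq i i' j j' i.2 i'.2 j.2 j'.2 h
    exact Prod.ext (Fin.ext h1) (Fin.ext h2)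
  have hbij : Function.Bijective ψ := by
    rw [Fintype.bijective_iff_injective_and_card]
    refine ⟨hinj, by simp [ZMod.card]⟩
  obtain ⟨⟨i, j⟩, hij⟩ := hbij.2 ((m : ℕ) : ZMod (p * q))
  refine ⟨i, i.2, j, j.2, ?_⟩
  rw [← ZMod.natCast_eq_natCast_iff]
  exact hij



lemma roots_indep (p q : ℕ) (hp : Nat.Prime p) (hq : Nat.Prime q) (hpq : p ≠ q) (ζ : ℂ)
    (hζ : IsPrimitiveRoot ζ (p * q)) :
    LinearIndependent ℚ (fun ij : Fin (p-1) × Fin (q-1) => ζ ^ (q * (ij.1 : ℕ) + p * (ij.2 : ℕ))) := by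
  have hppos : 0 < p := hp.pos
  have hqpos : 0 < q := hq.pos
  have hnpos : 0 < p * q := Nat.mul_pos hppos hqpos
  have hint : IsIntegral ℚ ζ := (hζ.isIntegral hnpos).tower_top
  set K : IntermediateField ℚ ℂ := ℚ⟮ζ⟯ with hK
  have hζmem : ζ ∈ K := mem_adjoin_simple_self ℚ ζ
  set ζ' : K := ⟨ζ, hζmem⟩ with hζ'
  have hζ'prim : IsPrimitiveRoot ζ' (p * q) := by
    rw [← IsPrimitiveRoot.coe_submonoidClass_iff]
    exact hζ
  have hts : K.toSubalgebra = Algebra.adjoin ℚ {ζ} := adjoin_simple_toSubalgebra_of_isAlgebraic hint.isAlgebraic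
  have e : Algebra.adjoin ℚ ({ζ} : Set ℂ) ≃ₐ[ℚ] K := Subalgebra.equivOfEq _ _ hts.symm
  set n : ℕ+ := ⟨p * q, hnpos⟩ with hn
  have hζn : IsPrimitiveRoot ζ (n : ℕ) := hζ
  haveI := hζn.adjoin_isCyclotomicExtension ℚ
  haveI : IsCyclotomicExtension {(n : ℕ)} ℚ K := IsCyclotomicExtension.equiv _ _ _ e
  have hfr : Module.finrank ℚ K = (p * q).totient :=
    IsCyclotomicExtension.finrank (n := (n : ℕ)) K (cyclotomic.irreducible_rat n.pos)
  set v : Fin (p-1) × Fin (q-1) → K := fun ij => ζ' ^ (q * (ij.1 : ℕ) + p * (ij.2 : ℕ)) with hv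
  set M : Submodule ℚ K := Submodule.span ℚ (Set.range v) with hM
  have hxp : IsPrimitiveRoot (ζ' ^ q) p := hζ'prim.pow hnpos (mul_comm p q)
  have hxq : IsPrimitiveRoot (ζ' ^ p) q := hζ'prim.pow hnpos rfl
  have hrow : ∀ j : ℕ, ∑ i ∈ range p, ζ' ^ (q * i + p * j) = 0 := by
    intro j
    have : ∑ i ∈ range p, ζ' ^ (q * i + p * j) = (∑ i ∈ range p, (ζ' ^ q) ^ i) * ζ' ^ (p * j) := by
      rw [Finset.sum_mul]
      exact Finset.sum_congr rfl fun i _ => by rw [pow_add, pow_mul]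
    rw [this, hxp.geom_sum_eq_zero hp.one_lt, zero_mul]
  have hcol : ∀ i : ℕ, ∑ j ∈ range q, ζ' ^ (q * i + p * j) = 0 := by
    intro i
    have : ∑ j ∈ range q, ζ' ^ (q * i + p * j) = (∑ j ∈ range q, (ζ' ^ p) ^ j) * ζ' ^ (q * i) := by
      rw [Finset.sum_mul]
      refine Finset.sum_congr rfl fun j _ => ?_
      rw [pow_add, pow_mul, pow_mul, mul_comm]
    rw [this, hxq.geom_sum_eq_zero hq.one_lt, zero_mul]
  have hA : ∀ i j : ℕ, i < p - 1 → j < q - 1 → ζ' ^ (q * i + p * j) ∈ M :=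
    fun i j hi hj => Submodule.subset_span ⟨(⟨i, hi⟩, ⟨j, hj⟩), rfl⟩
  obtain ⟨p', hp'⟩ : ∃ p', p = p' + 1 := ⟨p - 1, (Nat.succ_pred_eq_of_pos hppos).symm⟩
  obtain ⟨q', hq'⟩ : ∃ q', q = q' + 1 := ⟨q - 1, (Nat.succ_pred_eq_of_pos hqpos).symm⟩
  have hp1 : p - 1 = p' := by omega
  have hq1 : q - 1 = q' := by omega
  have hB : ∀ i j : ℕ, i < p → j < q - 1 → ζ' ^ (q * i + p * j) ∈ M := by
    intro i j hi hj
    rcases (by omega : i < p - 1 ∨ i = p') with h | h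
    · exact hA i j h hj
    · rw [h]
      have hsum := hrow j
      rw [hp', Finset.sum_range_succ, ← hp'] at hsum
      have hkey : ζ' ^ (q * p' + p * j) = -∑ i2 ∈ range p', ζ' ^ (q * i2 + p * j) := by
        linear_combination hsum
      rw [hkey]
      exact Submodule.neg_mem _ (Submodule.sum_mem _ fun i2 hi2 =>
        hA i2 j (by have := mem_range.mp hi2; omega) hj)
  have hC : ∀ i j : ℕ, i < p → j < q → ζ' ^ (q * i + p * j) ∈ M := by
    intro i j hi hj
    rcases (by omega : j < q - 1 ∨ j = q') with h | h
    · exact hB i j hi h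
    · rw [h]
      have hsum := hcol i
      rw [hq', Finset.sum_range_succ, ← hq'] at hsum
      have hkey : ζ' ^ (q * i + p * q') = -∑ j2 ∈ range q', ζ' ^ (q * i + p * j2) := by
        linear_combination hsum
      rw [hkey]
      exact Submodule.neg_mem _ (Submodule.sum_mem _ fun j2 hj2 =>
        hB i j2 hi (by have := mem_range.mp hj2; omega))
  have hpow : ∀ m : ℕ, ζ' ^ m ∈ M := by
    intro m
    obtain ⟨i, hi, j, hj, hmod⟩ := crt_exists p q hp hq hpq m
    have hredK : ∀ a : ℕ, ζ' ^ a = ζ' ^ (a % (p*q)) := by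
      intro a
      conv_lhs => rw [← Nat.div_add_mod a (p*q)]
      rw [pow_add, pow_mul, hζ'prim.pow_eq_one, one_pow, one_mul]
    have heq : ζ' ^ m = ζ' ^ (q * i + p * j) := by
      rw [hredK m, hredK (q * i + p * j), hmod]
    rw [heq]
    exact hC i j hi hj
  have htop : (⊤ : Submodule ℚ K) ≤ M := by
    have hζ'primn : IsPrimitiveRoot ζ' ((n : ℕ+) : ℕ) := hζ'prim
    set pb := hζ'primn.powerBasis ℚ with hpb
    have hgen : pb.gen = ζ' := hζ'primn.powerBasis_gen ℚ
    rw [← pb.basis.span_eq]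
    refine Submodule.span_le.mpr ?_
    rintro x ⟨i, rfl⟩
    rw [pb.coe_basis, hgen]
    exact hpow i
  have hcard : Fintype.card (Fin (p-1) × Fin (q-1)) = Module.finrank ℚ K := by
    rw [hfr, Fintype.card_prod, Fintype.card_fin, Fintype.card_fin,
      Nat.totient_mul ((Nat.coprime_primes hp hq).mpr hpq), Nat.totient_prime hp, Nat.totient_prime hq]
  have hindep : LinearIndependent ℚ v :=
    linearIndependent_of_top_le_span_of_card_eq_finrank htop hcard
  have hmap := hindep.map' K.val.toLinearMap (LinearMap.ker_eq_bot.mpr Subtype.val_injective)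
  exact hmap



lemma key_dvd (p q : ℕ) (hp : Nat.Prime p) (hq : Nat.Prime q) (hpq : p ≠ q) (ζ : ℂ)
    (hζ : IsPrimitiveRoot ζ (p * q)) (a : ℕ → ℕ → ℕ)
    (h01 : ∀ i j, a i j ≤ 1)
    (hsum : ∑ i ∈ range p, ∑ j ∈ range q, (a i j : ℂ) * ζ ^ (q * i + p * j) = 0) :
    p ∣ ∑ i ∈ range p, ∑ j ∈ range q, a i j ∨ q ∣ ∑ i ∈ range p, ∑ j ∈ range q, a i j := by
  have hppos : 0 < p := hp.pos
  have hqpos : 0 < q := hq.pos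
  obtain ⟨p', hp'⟩ : ∃ p', p = p' + 1 := ⟨p - 1, (Nat.succ_pred_eq_of_pos hppos).symm⟩
  obtain ⟨q', hq'⟩ : ∃ q', q = q' + 1 := ⟨q - 1, (Nat.succ_pred_eq_of_pos hqpos).symm⟩
  set E : ℕ → ℕ → ℂ := fun i j => ζ ^ (q * i + p * j) with hE
  have hsum' : ∑ i ∈ range p, ∑ j ∈ range q, (a i j : ℂ) * E i j = 0 := hsum
  have hxp : IsPrimitiveRoot (ζ ^ q) p := hζ.pow (Nat.mul_pos hppos hqpos) (mul_comm p q)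
  have hxq : IsPrimitiveRoot (ζ ^ p) q := hζ.pow (Nat.mul_pos hppos hqpos) rfl
  have hrow : ∀ j : ℕ, ∑ i ∈ range p, E i j = 0 := by
    intro j
    have h2 : ∑ i ∈ range p, E i j = (∑ i ∈ range p, (ζ ^ q) ^ i) * ζ ^ (p * j) := by
      rw [Finset.sum_mul]
      refine Finset.sum_congr rfl fun i _ => ?_
      show ζ ^ (q * i + p * j) = (ζ ^ q) ^ i * ζ ^ (p * j)
      rw [pow_add, pow_mul]
    rw [h2, hxp.geom_sum_eq_zero hp.one_lt, zero_mul]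
  have hcol : ∀ i : ℕ, ∑ j ∈ range q, E i j = 0 := by
    intro i
    have h2 : ∑ j ∈ range q, E i j = (∑ j ∈ range q, (ζ ^ p) ^ j) * ζ ^ (q * i) := by
      rw [Finset.sum_mul]
      refine Finset.sum_congr rfl fun j _ => ?_
      show ζ ^ (q * i + p * j) = (ζ ^ p) ^ j * ζ ^ (q * i)
      rw [pow_add, pow_mul, pow_mul, mul_comm]
    rw [h2, hxq.geom_sum_eq_zero hq.one_lt, zero_mul]
  set μ : ℕ → ℕ → ℚ := fun i j =>
    (a i j : ℚ) - (a p' j : ℚ) - (a i q' : ℚ) + (a p' q' : ℚ) with hμ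
  have hexp : ∀ i j : ℕ, ((μ i j : ℚ) : ℂ) * E i j =
      (a i j : ℂ) * E i j - (a p' j : ℂ) * E i j - (a i q' : ℂ) * E i j
        + (a p' q' : ℂ) * E i j := by
    intro i j
    have : ((μ i j : ℚ) : ℂ) = (a i j : ℂ) - (a p' j : ℂ) - (a i q' : ℂ) + (a p' q' : ℂ) := by
      rw [hμ]; push_cast; ring
    rw [this]; ring
  have hA2 : ∑ i ∈ range p, ∑ j ∈ range q, (a p' j : ℂ) * E i j = 0 := by
    rw [Finset.sum_comm]
    refine Finset.sum_eq_zero fun j _ => ?_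
    rw [← Finset.mul_sum, hrow j, mul_zero]
  have hA3 : ∑ i ∈ range p, ∑ j ∈ range q, (a i q' : ℂ) * E i j = 0 := by
    refine Finset.sum_eq_zero fun i _ => ?_
    rw [← Finset.mul_sum, hcol i, mul_zero]
  have hA4 : ∑ i ∈ range p, ∑ j ∈ range q, (a p' q' : ℂ) * E i j = 0 := by
    refine Finset.sum_eq_zero fun i _ => ?_
    rw [← Finset.mul_sum, hcol i, mul_zero]
  have hμsum : ∑ i ∈ range p, ∑ j ∈ range q, ((μ i j : ℚ) : ℂ) * E i j = 0 := by
    calc ∑ i ∈ range p, ∑ j ∈ range q, ((μ i j : ℚ) : ℂ) * E i j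
        = (∑ i ∈ range p, ∑ j ∈ range q, (a i j : ℂ) * E i j)
          - (∑ i ∈ range p, ∑ j ∈ range q, (a p' j : ℂ) * E i j)
          - (∑ i ∈ range p, ∑ j ∈ range q, (a i q' : ℂ) * E i j)
          + (∑ i ∈ range p, ∑ j ∈ range q, (a p' q' : ℂ) * E i j) := by
          simp only [hexp, Finset.sum_add_distrib, Finset.sum_sub_distrib]
      _ = 0 := by rw [hsum', hA2, hA3, hA4]; ring
  -- boundary vanishing of μ
  have hμb1 : ∀ j, μ p' j = 0 := by intro j; rw [hμ]; ring
  have hμb2 : ∀ i, μ i q' = 0 := by intro i; rw [hμ]; ring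
  -- restrict to the truncated grid
  have hμtrunc : ∑ i ∈ range p', ∑ j ∈ range q', ((μ i j : ℚ) : ℂ) * E i j = 0 := by
    have h1 : ∑ i ∈ range p, ∑ j ∈ range q, ((μ i j : ℚ) : ℂ) * E i j
        = ∑ i ∈ range p', ∑ j ∈ range q, ((μ i j : ℚ) : ℂ) * E i j := by
      rw [hp', Finset.sum_range_succ]
      simp [hμb1]
    have h2 : ∑ i ∈ range p', ∑ j ∈ range q, ((μ i j : ℚ) : ℂ) * E i j
        = ∑ i ∈ range p', ∑ j ∈ range q', ((μ i j : ℚ) : ℂ) * E i j := by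
      refine Finset.sum_congr rfl fun i _ => ?_
      rw [hq', Finset.sum_range_succ]
      simp [hμb2]
    rw [h1, h2] at hμsum
    exact hμsum
  -- linear independence kills μ on the truncated grid
  have hμzero : ∀ i < p', ∀ j < q', μ i j = 0 := by
    have hind := roots_indep p q hp hq hpq ζ hζ
    rw [Fintype.linearIndependent_iff] at hind
    have hfin : ∀ x : Fin (p-1) × Fin (q-1), μ x.1 x.2 = 0 := by
      refine hind (fun x => μ x.1 x.2) ?_
      rw [Fintype.sum_prod_type]
      have hcast : ∀ (x : Fin (p-1) × Fin (q-1)),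
          (μ (x.1 : ℕ) (x.2 : ℕ)) • (ζ ^ (q * (x.1:ℕ) + p * (x.2:ℕ)))
            = ((μ (x.1:ℕ) (x.2:ℕ) : ℚ) : ℂ) * E (x.1:ℕ) (x.2:ℕ) := by
        intro x
        rw [Rat.smul_def]
      calc ∑ i : Fin (p-1), ∑ j : Fin (q-1),
            (μ (i:ℕ) (j:ℕ)) • (ζ ^ (q * (i:ℕ) + p * (j:ℕ)))
          = ∑ i : Fin (p-1), ∑ j : Fin (q-1), ((μ (i:ℕ) (j:ℕ) : ℚ) : ℂ) * E (i:ℕ) (j:ℕ) := by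
            refine Finset.sum_congr rfl fun i _ => Finset.sum_congr rfl fun j _ => ?_
            exact hcast (i, j)
        _ = ∑ i ∈ range (p-1), ∑ j ∈ range (q-1), ((μ i j : ℚ) : ℂ) * E i j := by
            rw [Finset.sum_range fun i => ∑ j ∈ range (q-1), ((μ i j : ℚ) : ℂ) * E i j]
            refine Finset.sum_congr rfl fun i _ => ?_
            rw [Finset.sum_range fun j => ((μ (i:ℕ) j : ℚ) : ℂ) * E (i:ℕ) j]
        _ = 0 := by
            have e1 : p - 1 = p' := by omega
            have e2 : q - 1 = q' := by omega
            rw [e1, e2]; exact hμtrunc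
    intro i hi j hj
    have e1 : p - 1 = p' := by omega
    have e2 : q - 1 = q' := by omega
    have := hfin (⟨i, by omega⟩, ⟨j, by omega⟩)
    simpa using this
  -- structure: a i j + a p' q' = a p' j + a i q'  (as rationals)
  have hstruct : ∀ i < p, ∀ j < q, (a i j : ℚ) + (a p' q' : ℚ) = (a p' j : ℚ) + (a i q' : ℚ) := by
    intro i hi j hj
    rcases (by omega : i = p' ∨ i < p') with rfl | hi'
    · ring
    rcases (by omega : j = q' ∨ j < q') with rfl | hj'
    · ring
    have h0 := hμzero i hi' j hj'
    simp only [hμ] at h0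
    linarith
  -- rigidity
  by_cases hcase : ∀ i < p, ∀ j < q, a i j = a i q'
  · right
    have : ∑ i ∈ range p, ∑ j ∈ range q, a i j = q * ∑ i ∈ range p, a i q' := by
      rw [Finset.mul_sum]
      refine Finset.sum_congr rfl fun i hi => ?_
      rw [Finset.sum_congr rfl fun j hj => hcase i (mem_range.mp hi) j (mem_range.mp hj)]
      rw [Finset.sum_const, card_range, smul_eq_mul]
    rw [this]
    exact Dvd.intro _ rfl
  · left
    push_neg at hcase
    obtain ⟨i₁, hi₁, j₁, hj₁, hne⟩ := hcase
    -- first show the q'-column is constant: ∀ i < p, a i q' = a p' q'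
    have hcolconst : ∀ i < p, a i q' = a p' q' := by
      intro i hi
      by_contra hgne
      -- four values
      have w1 := hstruct i hi j₁ hj₁       -- a i j₁ + D = a p' j₁ + a i q'
      have w2 := hstruct i₁ hi₁ j₁ hj₁     -- a i₁ j₁ + D = a p' j₁ + a i₁ q'
      have b1 : a i j₁ ≤ 1 := h01 _ _
      have b2 : a p' j₁ ≤ 1 := h01 _ _
      have b3 : a i q' ≤ 1 := h01 _ _
      have b4 : a p' q' ≤ 1 := h01 _ _
      have b5 : a i₁ j₁ ≤ 1 := h01 _ _
      have b6 : a i₁ q' ≤ 1 := h01 _ _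
      have w1' : a i j₁ + a p' q' = a p' j₁ + a i q' := by exact_mod_cast w1
      have w2' : a i₁ j₁ + a p' q' = a p' j₁ + a i₁ q' := by exact_mod_cast w2
      -- h j₁ ≠ h q' from hne & w2'; g i ≠ 0 from hgne; contradiction via 0/1 values
      omega
    -- then a i j = a p' j for all i j
    have hrowconst : ∀ i < p, ∀ j < q, a i j = a p' j := by
      intro i hi j hj
      have hs := hstruct i hi j hj
      have hc := hcolconst i hi
      have hcq : (a i q' : ℚ) = (a p' q' : ℚ) := by exact_mod_cast hc
      have hfin : (a i j : ℚ) = (a p' j : ℚ) := by linarith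
      exact_mod_cast hfin
    have : ∑ i ∈ range p, ∑ j ∈ range q, a i j = p * ∑ j ∈ range q, a p' j := by
      have : ∀ i ∈ range p, ∑ j ∈ range q, a i j = ∑ j ∈ range q, a p' j := by
        intro i hi
        exact Finset.sum_congr rfl fun j hj => hrowconst i (mem_range.mp hi) j (mem_range.mp hj)
      rw [Finset.sum_congr rfl this, Finset.sum_const, card_range, smul_eq_mul]
    rw [this]
    exact Dvd.intro _ rfl



lemma final_arith (k p q : ℕ) (hk : 0 < k) (hp : Nat.Prime p) (hq : Nat.Prime q)
    (hn : 2 * k + 1 = p * q) (h1 : p ∣ k ∨ q ∣ k) (h2 : p ∣ (k + 1) ∨ q ∣ (k + 1)) : False := by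
  have mixed : ∀ p q : ℕ, Nat.Prime p → Nat.Prime q → 2 * k + 1 = p * q →
      p ∣ k → q ∣ (k + 1) → False := by
    intro p q hp hq hn hpk hqk
    have hco : Nat.Coprime p q := by
      rcases eq_or_ne p q with rfl | hne
      · exact absurd (Nat.dvd_one.mp (by simpa using Nat.dvd_sub hqk hpk)) hp.ne_one
      · exact (Nat.coprime_primes hp hq).mpr hne
    obtain ⟨a, ha⟩ := hpk
    obtain ⟨b, hb⟩ := hqk
    have hsum : p * a + q * b = p * q := by omega
    have hd : p ∣ q * b := by
      have : q * b = p * q - p * a := by omega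
      rw [this]
      exact Nat.dvd_sub (dvd_mul_right p q) (dvd_mul_right p a)
    have hpb : p ∣ b := hco.dvd_of_dvd_mul_left hd
    have hbpos : 0 < b := by
      rcases Nat.eq_zero_or_pos b with rfl | h
      · omega
      · exact h
    have hble : p ≤ b := Nat.le_of_dvd hbpos hpb
    have h5 : q * p ≤ q * b := Nat.mul_le_mul_left q hble
    have hqp : q * p = p * q := Nat.mul_comm q p
    omega
  rcases h1 with h1 | h1 <;> rcases h2 with h2 | h2
  · have h3 : p ∣ 1 := by simpa using Nat.dvd_sub h2 h1
    exact hp.ne_one (Nat.dvd_one.mp h3)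
  · exact mixed p q hp hq hn h1 h2
  · exact mixed q p hq hp (by rw [Nat.mul_comm q p]; exact hn) h1 h2
  · have h3 : q ∣ 1 := by simpa using Nat.dvd_sub h2 h1
    exact hq.ne_one (Nat.dvd_one.mp h3)

/-- Lemma 5 of the paper: if `2k+1 = p·q` is a product of two distinct primes, then
the sum of any `k` distinct `(2k+1)`-th roots of unity is nonzero. -/
theorem sum_distinct_roots_ne_zero_two_primes (k p q : ℕ) (hk : 0 < k)
    (hp : Nat.Prime p) (hq : Nat.Prime q) (hpq : p ≠ q) (hn : 2 * k + 1 = p * q)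
    (S : Finset ℂ) (hS : ∀ z ∈ S, z ^ (2 * k + 1) = 1) (hcard : S.card = k) :
    ∑ z ∈ S, z ≠ 0 := by
  intro hsum0
  have hnpos : 0 < p * q := by omega
  haveI : NeZero (p * q) := ⟨by omega⟩
  set ζ : ℂ := Complex.exp (2 * Real.pi * Complex.I / (p * q)) with hζdef
  have hζ : IsPrimitiveRoot ζ (p * q) := by
    have := Complex.isPrimitiveRoot_exp (p * q) (by omega)
    convert this using 2
    push_cast
    ring
  -- reduction of exponents mod p*q
  have hred : ∀ m : ℕ, ζ ^ m = ζ ^ (m % (p * q)) := by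
    intro m
    conv_lhs => rw [← Nat.div_add_mod m (p * q)]
    rw [pow_add, pow_mul, hζ.pow_eq_one, one_pow, one_mul]
  set φ : ℕ × ℕ → ℂ := fun u => ζ ^ (q * u.1 + p * u.2) with hφ
  set P : Finset (ℕ × ℕ) := (range p) ×ˢ (range q) with hP
  set T : Finset (ℕ × ℕ) := P.filter (fun u => φ u ∈ S) with hT
  have hinjT : Set.InjOn φ P := by
    rintro ⟨i, j⟩ hij ⟨i', j'⟩ hij' h
    simp only [hP, Finset.coe_product, Set.mem_prod, Finset.mem_coe, Finset.mem_range] at hij hij'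
    have hmod : q * i + p * j ≡ q * i' + p * j' [MOD p * q] := by
      have h1 : ζ ^ ((q * i + p * j) % (p * q)) = ζ ^ ((q * i' + p * j') % (p * q)) := by
        rw [← hred, ← hred]; exact h
      have h2 := hζ.pow_inj (Nat.mod_lt _ hnpos) (Nat.mod_lt _ hnpos) h1
      unfold Nat.ModEq
      exact h2
    obtain ⟨h1, h2⟩ := crt_inj p q hp hq hpq i i' j j' hij.1 hij'.1 hij.2 hij'.2 hmod
    exact Prod.ext h1 h2
  have hST : S = T.image φ := by
    apply Finset.Subset.antisymm
    · intro z hz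
      have hz1 : z ^ (p * q) = 1 := by rw [← hn]; exact hS z hz
      obtain ⟨m, hm, rfl⟩ := hζ.eq_pow_of_pow_eq_one hz1
      obtain ⟨i, hi, j, hj, hmod⟩ := crt_exists p q hp hq hpq m
      have heq : ζ ^ (q * i + p * j) = ζ ^ m := by
        rw [hred, hred m, hmod]
      rw [Finset.mem_image]
      refine ⟨(i, j), ?_, heq⟩
      rw [hT, Finset.mem_filter]
      constructor
      · rw [hP, Finset.mem_product, Finset.mem_range, Finset.mem_range]; exact ⟨hi, hj⟩
      · show φ (i, j) ∈ S
        rw [hφ]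
        show ζ ^ (q * i + p * j) ∈ S
        rw [heq]; exact hz
    · intro z hz
      rw [Finset.mem_image] at hz
      obtain ⟨u, hu, rfl⟩ := hz
      rw [hT, Finset.mem_filter] at hu
      exact hu.2
  have hTP : (T : Set (ℕ × ℕ)) ⊆ P := by
    intro u hu
    rw [hT] at hu
    simp only [Finset.coe_filter, Set.mem_setOf_eq] at hu
    exact hu.1
  have hinjT' : Set.InjOn φ T := hinjT.mono hTP
  have hcardT : T.card = k := by
    rw [← hcard, hST, Finset.card_image_of_injOn hinjT']
  have hsumT : ∑ u ∈ T, φ u = 0 := by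
    rw [hST, Finset.sum_image (fun x hx y hy h => hinjT' hx hy h)] at hsum0
    exact hsum0
  -- indicator functions
  set a : ℕ → ℕ → ℕ := fun i j => if φ (i, j) ∈ S then 1 else 0 with ha
  set a' : ℕ → ℕ → ℕ := fun i j => if φ (i, j) ∈ S then 0 else 1 with ha'
  have h01 : ∀ i j, a i j ≤ 1 := by intro i j; simp only [ha]; split <;> omega
  have h01' : ∀ i j, a' i j ≤ 1 := by intro i j; simp only [ha']; split <;> omega
  -- sum identities
  have hsum_a : ∑ i ∈ range p, ∑ j ∈ range q, (a i j : ℂ) * ζ ^ (q * i + p * j) = 0 := by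
    rw [← Finset.sum_product']
    have : ∀ u ∈ P, (a u.1 u.2 : ℂ) * ζ ^ (q * u.1 + p * u.2)
        = if φ u ∈ S then φ u else 0 := by
      rintro ⟨i, j⟩ _
      simp only [ha, hφ]
      split <;> simp
    rw [Finset.sum_congr rfl this, ← Finset.sum_filter]
    exact hsumT
  have hcount_a : ∑ i ∈ range p, ∑ j ∈ range q, a i j = k := by
    rw [← Finset.sum_product']
    have : ∑ u ∈ P, a u.1 u.2 = ∑ u ∈ P, if φ u ∈ S then 1 else 0 := rfl
    rw [this, ← Finset.sum_filter, ← hT, Finset.sum_const, smul_eq_mul, mul_one]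
    exact hcardT
  -- all roots sum to zero
  have hall : ∑ i ∈ range p, ∑ j ∈ range q, ζ ^ (q * i + p * j) = 0 := by
    have hxq : IsPrimitiveRoot (ζ ^ p) q := hζ.pow hnpos rfl
    refine Finset.sum_eq_zero fun i _ => ?_
    have h2 : ∑ j ∈ range q, ζ ^ (q * i + p * j) = (∑ j ∈ range q, (ζ ^ p) ^ j) * ζ ^ (q * i) := by
      rw [Finset.sum_mul]
      refine Finset.sum_congr rfl fun j _ => ?_
      rw [pow_add, pow_mul, pow_mul, mul_comm]
    rw [h2, hxq.geom_sum_eq_zero hq.one_lt, zero_mul]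
  have hsum_a' : ∑ i ∈ range p, ∑ j ∈ range q, (a' i j : ℂ) * ζ ^ (q * i + p * j) = 0 := by
    have hsplit : ∀ i j : ℕ, (a' i j : ℂ) * ζ ^ (q * i + p * j)
        = ζ ^ (q * i + p * j) - (a i j : ℂ) * ζ ^ (q * i + p * j) := by
      intro i j
      simp only [ha, ha', hφ]
      split <;> simp
    simp only [hsplit, Finset.sum_sub_distrib]
    rw [hall, hsum_a, sub_zero]
  have hcount_a' : ∑ i ∈ range p, ∑ j ∈ range q, a' i j = k + 1 := by
    have hone : ∀ i j : ℕ, a i j + a' i j = 1 := by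
      intro i j; simp only [ha, ha']; split <;> omega
    have htot : (∑ i ∈ range p, ∑ j ∈ range q, a i j)
        + (∑ i ∈ range p, ∑ j ∈ range q, a' i j)
        = p * q := by
      rw [← Finset.sum_add_distrib]
      have : ∀ i ∈ range p, (∑ j ∈ range q, a i j) + (∑ j ∈ range q, a' i j) = q := by
        intro i _
        rw [← Finset.sum_add_distrib]
        simp [hone]
      calc ∑ i ∈ range p, ((∑ j ∈ range q, a i j) + (∑ j ∈ range q, a' i j))
          = ∑ i ∈ range p, q := Finset.sum_congr rfl this
        _ = p * q := by rw [Finset.sum_const, card_range, smul_eq_mul]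
    omega
  have hd1 := key_dvd p q hp hq hpq ζ hζ a h01 hsum_a
  have hd2 := key_dvd p q hp hq hpq ζ hζ a' h01' hsum_a'
  rw [hcount_a] at hd1
  rw [hcount_a'] at hd2
  exact final_arith k p q hk hp hq hn hd1 hd2
end

section
/- Let k be a positive integer and suppose 2k+1 = p^e for a prime p and positive integer e. Then every k-matrix is invertible: for every vector v : Fin (2k+1) → ℂ whose entries all lie in {0,1} and which takes the value 1 at exactly k indices, the circulant matrix with entries M i j = v (i − j) has nonzero determinant. -/
open Polynomial in
lemma key_sum_ne_zero (k p e : ℕ) (hk : 0 < k)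
    (hp : Nat.Prime p) (he : 0 < e) (hpe : 2 * k + 1 = p ^ e)
    (v : Fin (2 * k + 1) → ℂ) (hv : ∀ i, v i = 0 ∨ v i = 1)
    (hcard : (Finset.univ.filter (fun i => v i = 1)).card = k)
    (ω : ℂ) (hω : ω ^ (2 * k + 1) = 1) :
    ∑ t : Fin (2 * k + 1), v t * ω ^ (t : ℕ) ≠ 0 := by
  intro h0
  have hn : 2 * k + 1 ≠ 0 := Nat.succ_ne_zero _
  have hd : orderOf ω ∣ 2 * k + 1 := orderOf_dvd_of_pow_eq_one hω
  have hd0 : orderOf ω ≠ 0 := by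
    intro h; rw [h] at hd; exact hn (zero_dvd_iff.mp hd)
  obtain ⟨m, hm, hdm⟩ := (Nat.dvd_prime_pow hp).mp (hpe ▸ hd)
  -- sum of all v t is k
  have hsum : ∑ t : Fin (2 * k + 1), v t = (k : ℂ) := by
    have : ∀ t, v t = (if v t = 1 then (1 : ℂ) else 0) := by
      intro t; rcases hv t with h | h <;> simp [h]
    rw [Finset.sum_congr rfl fun t _ => this t, Finset.sum_boole, hcard]
  rcases Nat.eq_zero_or_pos m with hm0 | hm0
  · -- ω = 1
    subst hm0
    have : ω = 1 := orderOf_eq_one_iff.mp (by simpa using hdm)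
    rw [this] at h0
    simp only [one_pow, mul_one] at h0
    rw [hsum] at h0
    exact (Nat.cast_ne_zero.mpr hk.ne') h0
  · obtain ⟨m', rfl⟩ : ∃ m', m = m' + 1 := ⟨m - 1, (Nat.succ_pred_eq_of_pos hm0).symm⟩
    haveI : Fact p.Prime := ⟨hp⟩
    have hdpos : 0 < p ^ (m' + 1) := pow_pos hp.pos _
    have hprim : IsPrimitiveRoot ω (p ^ (m' + 1)) := hdm ▸ IsPrimitiveRoot.orderOf ω
    set c : Fin (2 * k + 1) → ℕ := fun t => if v t = 1 then 1 else 0 with hc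
    have hvc : ∀ t, v t = (c t : ℂ) := by
      intro t; rcases hv t with h | h <;> simp [hc, h]
    set P : ℤ[X] := ∑ t : Fin (2 * k + 1), C ((c t : ℤ)) * X ^ (t : ℕ) with hP
    have haev : aeval ω P = 0 := by
      rw [hP]
      simp only [map_sum, map_mul, aeval_C, aeval_X_pow]
      rw [← h0]
      refine Finset.sum_congr rfl fun t _ => ?_
      rw [hvc t]; push_cast; ring
    have hmin : minpoly ℤ ω ∣ P :=
      minpoly.isIntegrallyClosed_dvd (hprim.isIntegral hdpos) haev
    rw [← Polynomial.cyclotomic_eq_minpoly hprim hdpos] at hmin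
    obtain ⟨q, hq⟩ := hmin
    have heval : P.eval 1 = (k : ℤ) := by
      rw [hP]
      simp only [eval_finset_sum, eval_mul, eval_C, eval_pow, eval_X, one_pow, mul_one]
      have : ∑ t : Fin (2 * k + 1), ((c t : ℤ)) =
          ((Finset.univ.filter (fun i => v i = 1)).card : ℤ) := by
        rw [show (fun t => ((c t : ℤ))) = fun t => if v t = 1 then 1 else 0 by
          funext t; simp [hc]]
        rw [Finset.sum_boole]
      rw [this, hcard]
    have hpdvd : (p : ℤ) ∣ (k : ℤ) := by
      rw [← heval, hq, eval_mul, eval_one_cyclotomic_prime_pow]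
      exact Dvd.intro _ rfl
    have hpk : p ∣ k := Int.natCast_dvd_natCast.mp hpdvd
    have hp2k1 : p ∣ 2 * k + 1 := hpe ▸ dvd_pow_self p he.ne'
    have : p ∣ 1 := by
      have h2k : p ∣ 2 * k := hpk.mul_left 2
      simpa using Nat.dvd_sub hp2k1 h2k
    have h1 := Nat.le_of_dvd one_pos this
    have h2 := hp.two_le
    omega

/-- Lemma 9 of the paper: if `2k+1 = p^e` is a prime power, then every `k`-matrix
(a `(2k+1)×(2k+1)` circulant 0–1 matrix whose first row has exactly `k` ones)
is invertible. -/
theorem kMatrix_invertible_prime_pow (k p e : ℕ) (hk : 0 < k)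
    (hp : Nat.Prime p) (he : 0 < e) (hpe : 2 * k + 1 = p ^ e)
    (v : Fin (2 * k + 1) → ℂ) (hv : ∀ i, v i = 0 ∨ v i = 1)
    (hcard : (Finset.univ.filter (fun i => v i = 1)).card = k) :
    (Matrix.circulant v).det ≠ 0 := by
  have hn0 : (2 * k + 1 : ℕ) ≠ 0 := Nat.succ_ne_zero _
  obtain ⟨ζ, hζ⟩ : ∃ ζ : ℂ, IsPrimitiveRoot ζ (2 * k + 1) :=
    ⟨_, Complex.isPrimitiveRoot_exp _ hn0⟩
  have hζ0 : ζ ≠ 0 := hζ.ne_zero hn0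
  have hζn : ζ ^ (2 * k + 1) = 1 := hζ.pow_eq_one
  have hmodpow : ∀ x : ℕ, ζ ^ (x % (2 * k + 1)) = ζ ^ x := by
    intro x
    conv_rhs => rw [← Nat.mod_add_div x (2 * k + 1)]
    rw [pow_add, pow_mul, hζn, one_pow, mul_one]
  set W := Matrix.vandermonde (fun i : Fin (2 * k + 1) => ζ ^ (i : ℕ)) with hW
  set d : Fin (2 * k + 1) → ℂ :=
    fun j => ∑ t : Fin (2 * k + 1), v t * ((ζ⁻¹) ^ (j : ℕ)) ^ (t : ℕ) with hd
  have hkey : Matrix.circulant v * W = W * Matrix.diagonal d := by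
    ext i j
    rw [Matrix.mul_diagonal, Matrix.mul_apply]
    simp only [Matrix.circulant_apply, hW, Matrix.vandermonde_apply, hd]
    rw [Finset.mul_sum,
      ← Equiv.sum_comp (Equiv.subLeft i) (fun m => v (i - m) * (ζ ^ (m : ℕ)) ^ (j : ℕ))]
    refine Finset.sum_congr rfl fun t _ => ?_
    simp only [Equiv.subLeft_apply, sub_sub_cancel]
    have hexp : (ζ ^ ((i - t : Fin (2 * k + 1)) : ℕ)) ^ (j : ℕ) * ζ ^ ((t : ℕ) * (j : ℕ)) =
        (ζ ^ (i : ℕ)) ^ (j : ℕ) := by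
      rw [← pow_mul, ← pow_mul, ← pow_add, ← add_mul]
      have hmod : (((i - t : Fin (2 * k + 1)) : ℕ) + (t : ℕ)) % (2 * k + 1) = (i : ℕ) := by
        rw [← Fin.val_add, sub_add_cancel]
      have : ((((i - t : Fin (2 * k + 1)) : ℕ) + (t : ℕ)) * (j : ℕ)) % (2 * k + 1) =
          ((i : ℕ) * (j : ℕ)) % (2 * k + 1) :=
        Nat.ModEq.mul_right _ (by rw [Nat.ModEq, hmod, Nat.mod_eq_of_lt i.is_lt])
      rw [← hmodpow, this, hmodpow]
    have h2 : ((ζ⁻¹) ^ (j : ℕ)) ^ (t : ℕ) = (ζ ^ ((t : ℕ) * (j : ℕ)))⁻¹ := by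
      rw [inv_pow, inv_pow, ← pow_mul, mul_comm]
    have hexp' : (ζ ^ ((i - t : Fin (2 * k + 1)) : ℕ)) ^ (j : ℕ) =
        (ζ ^ (i : ℕ)) ^ (j : ℕ) * (ζ ^ ((t : ℕ) * (j : ℕ)))⁻¹ := by
      rw [eq_mul_inv_iff_mul_eq₀ (pow_ne_zero _ hζ0)]; exact hexp
    rw [hexp', h2]; ring
  have hdetW : W.det ≠ 0 := by
    rw [hW, Matrix.det_vandermonde]
    refine Finset.prod_ne_zero_iff.mpr fun i _ => Finset.prod_ne_zero_iff.mpr fun j hj => ?_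
    rw [sub_ne_zero]
    intro hEq
    have := hζ.pow_inj j.is_lt i.is_lt hEq
    exact absurd (Fin.ext this) (Finset.mem_Ioi.mp hj).ne'
  have hprod : ∏ j, d j ≠ 0 := by
    refine Finset.prod_ne_zero_iff.mpr fun j _ => ?_
    have hω : ((ζ⁻¹) ^ (j : ℕ)) ^ (2 * k + 1) = 1 := by
      rw [← pow_mul, mul_comm, pow_mul, inv_pow, hζn, inv_one, one_pow]
    exact key_sum_ne_zero k p e hk hp he hpe v hv hcard _ hω
  have hdets : (Matrix.circulant v).det * W.det = W.det * ∏ j, d j := by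
    rw [← Matrix.det_mul, hkey, Matrix.det_mul, Matrix.det_diagonal]
  intro h
  rw [h, zero_mul] at hdets
  exact (mul_ne_zero hdetW hprod) hdets.symm
end

section
/- Let k be a positive integer and suppose 2k+1 = p·q for two distinct primes p and q. Then every k-matrix is invertible: for every vector v : Fin (2k+1) → ℂ whose entries all lie in {0,1} and which takes the value 1 at exactly k indices, the circulant matrix with entries M i j = v (i − j) has nonzero determinant. -/
open Polynomial Finset
open Fin.NatCast

private lemma pow_mod_helper {ξ : ℂ} {t : ℕ} (hξ : ξ ^ t = 1) (m : ℕ) :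
    ξ ^ (m % t) = ξ ^ m := by
  conv_rhs => rw [← Nat.div_add_mod m t, pow_add, pow_mul, hξ, one_pow, one_mul]

private lemma pow_val_add {t : ℕ} [NeZero t] {ξ : ℂ} (hξ : ξ ^ t = 1) (a b : Fin t) :
    ξ ^ ((a + b) : Fin t).val = ξ ^ a.val * ξ ^ b.val := by
  rw [Fin.val_add, pow_mod_helper hξ, pow_add]

private lemma rot_sum {t : ℕ} [NeZero t] {ξ : ℂ} (hξ : ξ ^ t = 1) (w : Fin t → ℂ) (c : Fin t) :
    ∑ i, w (i - c) * ξ ^ (i : Fin t).val = ξ ^ c.val * ∑ m, w m * ξ ^ (m : Fin t).val := by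
  have key := Fintype.sum_equiv (Equiv.addRight c)
    (fun m : Fin t => w m * (ξ ^ c.val * ξ ^ m.val))
    (fun i : Fin t => w (i - c) * ξ ^ i.val) ?_
  · calc ∑ i, w (i - c) * ξ ^ (i : Fin t).val
        = ∑ m, w m * (ξ ^ c.val * ξ ^ (m : Fin t).val) := key.symm
      _ = ξ ^ c.val * ∑ m, w m * ξ ^ (m : Fin t).val := by
          rw [Finset.mul_sum]; apply Finset.sum_congr rfl; intros; ring
  · intro m
    simp only [Equiv.coe_addRight, add_sub_cancel_right]
    rw [pow_val_add hξ]
    ring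

private lemma kml_fourier_zero {t : ℕ} [NeZero t] (c : Fin t → ℂ)
    (h : ∀ ξ : ℂ, ξ ^ t = 1 → ∑ s, c s * ξ ^ (s : Fin t).val = 0) : c = 0 := by
  have ht : 0 < t := Nat.pos_of_ne_zero (NeZero.ne t)
  set P : ℂ[X] := ∑ s : Fin t, C (c s) * X ^ (s.val) with hP
  have hcoeff : ∀ s : Fin t, P.coeff s.val = c s := by
    intro s
    rw [hP, Polynomial.finset_sum_coeff, Finset.sum_eq_single s]
    · simp
    · intro b _ hb
      rw [Polynomial.coeff_C_mul, Polynomial.coeff_X_pow,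
        if_neg (fun hh => hb (Fin.val_injective hh.symm)), mul_zero]
    · simp
  have hPzero : P = 0 := by
    by_contra hne
    have hdeg : P.natDegree ≤ t - 1 := by
      apply Polynomial.natDegree_sum_le_of_forall_le
      intro s _
      exact (Polynomial.natDegree_C_mul_X_pow_le _ _).trans (by omega)
    have hsub : nthRootsFinset t (1 : ℂ) ⊆ P.roots.toFinset := by
      intro ξ hmem
      rw [Multiset.mem_toFinset, Polynomial.mem_roots hne]
      have hξ1 : ξ ^ t = 1 := (Polynomial.mem_nthRootsFinset ht 1).1 hmem
      have : P.eval ξ = ∑ s : Fin t, c s * ξ ^ (s.val) := by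
        rw [hP, Polynomial.eval_finset_sum]
        simp
      rw [Polynomial.IsRoot.def, this]
      exact h ξ hξ1
    have hcard := Finset.card_le_card hsub
    rw [IsPrimitiveRoot.card_nthRootsFinset (Complex.isPrimitiveRoot_exp t (NeZero.ne t))] at hcard
    have h2 : P.roots.toFinset.card ≤ Multiset.card P.roots := Multiset.toFinset_card_le _
    have h3 : Multiset.card P.roots ≤ P.natDegree := Polynomial.card_roots' P
    omega
  funext s
  have := hcoeff s
  rw [hPzero] at this
  simpa using this.symm

private lemma prim_transfer {t : ℕ} (ht : 0 < t) (c : Fin t → ℕ) {ζ ξ : ℂ}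
    (hζ : IsPrimitiveRoot ζ t) (hξ : IsPrimitiveRoot ξ t)
    (h0 : ∑ s, (c s : ℂ) * ζ ^ (s : Fin t).val = 0) :
    ∑ s, (c s : ℂ) * ξ ^ (s : Fin t).val = 0 := by
  set g : ℚ[X] := ∑ s : Fin t, C ((c s : ℚ)) * X ^ (s.val) with hg
  have haev : ∀ η : ℂ, aeval η g = ∑ s, (c s : ℂ) * η ^ (s : Fin t).val := by
    intro η
    rw [hg, map_sum]
    apply Finset.sum_congr rfl
    intro s _
    rw [map_mul, map_pow, aeval_X, aeval_C]
    norm_num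
  have hdvd : minpoly ℚ ζ ∣ g := minpoly.dvd ℚ ζ (by rw [haev]; exact h0)
  rw [← Polynomial.cyclotomic_eq_minpoly_rat hζ ht,
    Polynomial.cyclotomic_eq_minpoly_rat hξ ht] at hdvd
  obtain ⟨h, hh⟩ := hdvd
  have hx := haev ξ
  rw [hh, map_mul, minpoly.aeval, zero_mul] at hx
  exact hx.symm

private lemma sum01 {α : Type*} [Fintype α] (W : α → ℂ) (h : ∀ z, W z = 0 ∨ W z = 1) :
    ∑ z, W z = ((Finset.univ.filter (fun z => W z = 1)).card : ℂ) := by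
  classical
  rw [Finset.card_filter, Nat.cast_sum]
  apply Finset.sum_congr rfl
  intro z _
  rcases h z with h0 | h1
  · simp [h0]
  · simp [h1]

private lemma dvd_prime_mul {p q d : ℕ} (hp : p.Prime) (hq : q.Prime) (hd : d ∣ p * q) :
    d = 1 ∨ d = p ∨ d = q ∨ d = p * q := by
  by_cases hpd : p ∣ d
  · obtain ⟨e, rfl⟩ := hpd
    have he : e ∣ q := by
      have := (mul_dvd_mul_iff_left (a := p) (by exact_mod_cast hp.pos.ne' : p ≠ 0)).1 hd
      exact this
    rcases (Nat.Prime.eq_one_or_self_of_dvd hq e he) with rfl | rfl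
    · right; left; simp
    · right; right; right; rfl
  · have hcop : Nat.Coprime d p := ((Nat.Prime.coprime_iff_not_dvd hp).2 hpd).symm
    have hdq : d ∣ q := Nat.Coprime.dvd_of_dvd_mul_left hcop hd
    rcases (Nat.Prime.eq_one_or_self_of_dvd hq d hdq) with rfl | rfl
    · left; rfl
    · right; right; left; rfl

private lemma kml_prime_case {N r : ℕ} [NeZero N] (hr : r.Prime) (u : Fin N → ℕ) {ζ : ℂ}
    (hprim : IsPrimitiveRoot ζ r)
    (hF : ∑ m, (u m : ℂ) * ζ ^ (m : Fin N).val = 0) : r ∣ ∑ m, u m := by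
  classical
  haveI : NeZero r := ⟨hr.pos.ne'⟩
  have hζr : ζ ^ r = 1 := hprim.pow_eq_one
  set fib : Fin N → Fin r := fun m => ⟨m.val % r, Nat.mod_lt _ hr.pos⟩ with hfib
  set c : Fin r → ℕ := fun s => ∑ m ∈ Finset.univ.filter (fun m => fib m = s), u m with hc
  have hgroup : ∀ η : ℂ, η ^ r = 1 →
      ∑ s : Fin r, (c s : ℂ) * η ^ (s : Fin r).val
        = ∑ m : Fin N, (u m : ℂ) * η ^ (m : Fin N).val := by
    intro η hη
    have h2 : ∀ m : Fin N, (u m : ℂ) * η ^ (m : Fin N).val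
        = (u m : ℂ) * η ^ ((fib m) : Fin r).val := by
      intro m
      rw [hfib]
      simp only
      rw [pow_mod_helper hη]
    calc ∑ s : Fin r, (c s : ℂ) * η ^ (s : Fin r).val
        = ∑ s : Fin r, ∑ m ∈ Finset.univ.filter (fun m => fib m = s),
            (u m : ℂ) * η ^ ((fib m) : Fin r).val := by
          apply Finset.sum_congr rfl
          intro s _
          rw [hc]
          push_cast
          rw [Finset.sum_mul]
          apply Finset.sum_congr rfl
          intro m hm
          rw [← (Finset.mem_filter.1 hm).2]
      _ = ∑ m : Fin N, (u m : ℂ) * η ^ ((fib m) : Fin r).val :=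
          Finset.sum_fiberwise _ _ _
      _ = ∑ m : Fin N, (u m : ℂ) * η ^ (m : Fin N).val := by
          apply Finset.sum_congr rfl
          intro m _
          exact (h2 m).symm
  -- the counts satisfy c s = c (s - 1)
  have hζc : ∑ s : Fin r, (c s : ℂ) * ζ ^ (s : Fin r).val = 0 := by
    rw [hgroup ζ hζr]; exact hF
  have hrel : ∀ s : Fin r, (c s : ℂ) = (c (s - 1) : ℂ) := by
    have hz := kml_fourier_zero (fun s => (c s : ℂ) - (c (s - 1) : ℂ)) ?_
    · intro s
      have := congrFun hz s
      simpa [sub_eq_zero] using this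
    · intro η hη
      have hrot := rot_sum hη (fun s => (c s : ℂ)) 1
      have hsplit : ∑ s : Fin r, ((c s : ℂ) - (c (s - 1) : ℂ)) * η ^ (s : Fin r).val
          = (1 - η ^ ((1 : Fin r)).val) * ∑ s : Fin r, (c s : ℂ) * η ^ (s : Fin r).val := by
        rw [sub_mul, one_mul, ← hrot, ← Finset.sum_sub_distrib]
        apply Finset.sum_congr rfl
        intros; ring
      rw [hsplit]
      by_cases hη1 : η = 1
      · subst hη1; simp
      · have hone : ((1 : Fin r)).val = 1 := by
          rw [Fin.val_one']
          exact Nat.mod_eq_of_lt hr.one_lt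
        have horddvd : orderOf η ∣ r := orderOf_dvd_of_pow_eq_one hη
        have hord : orderOf η = r := by
          rcases (Nat.Prime.eq_one_or_self_of_dvd hr _ horddvd) with h1 | h1
          · exact absurd (orderOf_eq_one_iff.1 h1) hη1
          · exact h1
        have hprimη : IsPrimitiveRoot η r := hord ▸ IsPrimitiveRoot.orderOf η
        rw [prim_transfer hr.pos c hprim hprimη hζc, mul_zero]
  have hrelN : ∀ s : Fin r, c s = c (s - 1) := by
    intro s; exact_mod_cast hrel s
  have hconst : ∀ s : Fin r, c s = c 0 := by
    have key : ∀ m : ℕ, c ((m : Fin r)) = c 0 := by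
      intro m
      induction m with
      | zero => norm_num
      | succ m ih =>
        have h1 := hrelN ((m + 1 : ℕ) : Fin r)
        have h2 : ((m + 1 : ℕ) : Fin r) - 1 = ((m : ℕ) : Fin r) := by
          rw [Nat.cast_succ, add_sub_cancel_right]
        rw [h1, h2, ih]
    intro s
    conv_lhs => rw [← Fin.cast_val_eq_self s]
    exact key s.val
  have hsum : ∑ m, u m = ∑ s : Fin r, c s := (Finset.sum_fiberwise _ _ _).symm
  rw [hsum, Finset.sum_congr rfl (fun s _ => hconst s), Finset.sum_const, Finset.card_univ,
    Fintype.card_fin, smul_eq_mul]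
  exact Dvd.intro _ rfl

private lemma kml_dvd_contra {r k : ℕ} (hr : r.Prime) (hrk : r ∣ k) (hrn : r ∣ 2 * k + 1) :
    False := by
  have h2k : r ∣ 2 * k := Dvd.dvd.mul_left hrk 2
  have h1 : r ∣ 1 := by
    have := Nat.dvd_sub hrn h2k
    simpa using this
  exact Nat.Prime.one_lt hr |>.ne' (Nat.dvd_one.1 h1)

private lemma kml_count_eq {α : Type*} [Fintype α] (W : α → ℂ) (h : ∀ z, W z = 0 ∨ W z = 1) :
    ∃ N : ℕ, ∑ z, W z = (N : ℂ) :=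
  ⟨_, sum01 W h⟩

private lemma kml_endgame {p q k : ℕ} [NeZero p] [NeZero q]
    (hp : p.Prime) (hq : q.Prime) (hpq : p ≠ q)
    (hn : 2 * k + 1 = p * q) (V : ZMod p × ZMod q → ℂ)
    (hV : ∀ z, V z = 0 ∨ V z = 1)
    (hsum : ∑ z, V z = (k : ℂ))
    (hrel : ∀ a b, V (a, b) - V (a - (q : ZMod p), b) - V (a, b - (p : ZMod q))
      + V (a - (q : ZMod p), b - (p : ZMod q)) = 0) : False := by
  classical
  haveI : Fact p.Prime := ⟨hp⟩
  haveI : Fact q.Prime := ⟨hq⟩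
  have hqp : (q : ZMod p) ≠ 0 := by
    intro h
    exact hpq ((Nat.prime_dvd_prime_iff_eq hp hq).1 ((ZMod.natCast_eq_zero_iff q p).1 h))
  have hpq' : (p : ZMod q) ≠ 0 := by
    intro h
    exact hpq ((Nat.prime_dvd_prime_iff_eq hq hp).1 ((ZMod.natCast_eq_zero_iff p q).1 h)).symm
  have R1 : ∀ (i : ℕ) (a : ZMod p) (b : ZMod q),
      V (a, b) - V (a - i • (q : ZMod p), b) - V (a, b - (p : ZMod q))
        + V (a - i • (q : ZMod p), b - (p : ZMod q)) = 0 := by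
    intro i
    induction i with
    | zero => intro a b; simp
    | succ i ih =>
      intro a b
      rw [succ_nsmul, ← sub_sub]
      linear_combination (ih a b) + (hrel (a - i • (q : ZMod p)) b)
  have R2 : ∀ (j i : ℕ) (a : ZMod p) (b : ZMod q),
      V (a, b) - V (a - i • (q : ZMod p), b) - V (a, b - j • (p : ZMod q))
        + V (a - i • (q : ZMod p), b - j • (p : ZMod q)) = 0 := by
    intro j
    induction j with
    | zero => intro i a b; simp
    | succ j ih =>
      intro i a b
      rw [succ_nsmul, ← sub_sub]
      linear_combination (ih i a b) + (R1 i a (b - j • (p : ZMod q)))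
  have surj1 : ∀ a a' : ZMod p, ∃ i : ℕ, a' = a - i • (q : ZMod p) := by
    intro a a'
    refine ⟨((a - a') * (q : ZMod p)⁻¹).val, ?_⟩
    rw [nsmul_eq_mul, ZMod.natCast_val, ZMod.cast_id, mul_assoc,
      ZMod.inv_mul_of_unit _ (Ne.isUnit hqp), mul_one]
    ring
  have surj2 : ∀ b b' : ZMod q, ∃ j : ℕ, b' = b - j • (p : ZMod q) := by
    intro b b'
    refine ⟨((b - b') * (p : ZMod q)⁻¹).val, ?_⟩
    rw [nsmul_eq_mul, ZMod.natCast_val, ZMod.cast_id, mul_assoc,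
      ZMod.inv_mul_of_unit _ (Ne.isUnit hpq'), mul_one]
    ring
  have Rect : ∀ (a a' : ZMod p) (b b' : ZMod q),
      V (a, b) - V (a', b) - V (a, b') + V (a', b') = 0 := by
    intro a a' b b'
    obtain ⟨i, rfl⟩ := surj1 a a'
    obtain ⟨j, rfl⟩ := surj2 b b'
    exact R2 j i a b
  by_cases hconst : ∀ (a a' : ZMod p) (b : ZMod q), V (a, b) = V (a', b)
  · -- all columns constant: p ∣ k
    obtain ⟨N, hN⟩ := kml_count_eq (fun b => V (0, b)) (fun b => hV (0, b))
    have hks : (k : ℂ) = ((p * N : ℕ) : ℂ) := by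
      rw [← hsum, Fintype.sum_prod_type]
      calc ∑ a : ZMod p, ∑ b : ZMod q, V (a, b)
          = ∑ _a : ZMod p, ∑ b : ZMod q, V (0, b) := by
            apply Finset.sum_congr rfl
            intro a _
            exact Finset.sum_congr rfl (fun b _ => hconst a 0 b)
        _ = ((p * N : ℕ) : ℂ) := by
            rw [Finset.sum_const, Finset.card_univ, ZMod.card, hN]
            push_cast
            ring
    have : k = p * N := by exact_mod_cast hks
    exact kml_dvd_contra hp ⟨N, this⟩ ⟨q, hn⟩
  · push_neg at hconst
    obtain ⟨a, a', b₀, hne⟩ := hconst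
    have hstep : ∀ b : ZMod q, V (a, b) = V (a, b₀) := by
      intro b
      have heq := Rect a a' b b₀
      rcases hV (a, b) with h1 | h1 <;> rcases hV (a, b₀) with h2 | h2 <;>
        rcases hV (a', b) with h3 | h3 <;> rcases hV (a', b₀) with h4 | h4 <;>
        simp only [h1, h2, h3, h4] at heq hne ⊢ <;>
        first
          | rfl
          | exact absurd rfl hne
          | norm_num at heq
    have hcol : ∀ (x : ZMod p) (b : ZMod q), V (x, b) = V (x, b₀) := by
      intro x b
      have h1 := Rect x a b b₀
      linear_combination h1 + hstep b
    obtain ⟨N, hN⟩ := kml_count_eq (fun x => V (x, b₀)) (fun x => hV (x, b₀))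
    have hks : (k : ℂ) = ((q * N : ℕ) : ℂ) := by
      rw [← hsum, Fintype.sum_prod_type]
      calc ∑ x : ZMod p, ∑ b : ZMod q, V (x, b)
          = ∑ x : ZMod p, ∑ _b : ZMod q, V (x, b₀) := by
            apply Finset.sum_congr rfl
            intro x _
            exact Finset.sum_congr rfl (fun b _ => hcol x b)
        _ = ((q * N : ℕ) : ℂ) := by
            simp only [Finset.sum_const, Finset.card_univ, ZMod.card]
            rw [← Finset.smul_sum, hN]
            push_cast
            ring
    have hkN : k = q * N := by exact_mod_cast hks
    exact kml_dvd_contra hq ⟨N, hkN⟩ ⟨p, by rw [hn, mul_comm]⟩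

/-- Lemma 10 of the paper: if `2k+1 = p·q` is a product of two distinct primes, then
every `k`-matrix (a `(2k+1)×(2k+1)` circulant 0–1 matrix whose first row has exactly
`k` ones) is invertible. -/
theorem kMatrix_invertible_two_primes (k p q : ℕ) (hk : 0 < k)
    (hp : Nat.Prime p) (hq : Nat.Prime q) (hpq : p ≠ q) (hn : 2 * k + 1 = p * q)
    (v : Fin (2 * k + 1) → ℂ) (hv : ∀ i, v i = 0 ∨ v i = 1)
    (hcard : (Finset.univ.filter (fun i => v i = 1)).card = k) :
    (Matrix.circulant v).det ≠ 0 := by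
  classical
  intro hdet
  haveI : NeZero p := ⟨hp.pos.ne'⟩
  haveI : NeZero q := ⟨hq.pos.ne'⟩
  have hpn : p ∣ 2 * k + 1 := ⟨q, hn⟩
  have hqn : q ∣ 2 * k + 1 := ⟨p, by rw [hn, mul_comm]⟩
  have hcop : Nat.Coprime p q := (Nat.coprime_primes hp hq).2 hpq
  set u : Fin (2 * k + 1) → ℕ := fun i => if v i = 1 then 1 else 0 with hu
  have hvu : ∀ i, v i = (u i : ℂ) := by
    intro i
    rcases hv i with h | h <;> simp [hu, h]
  have hsumu : ∑ m, u m = k := by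
    simp only [hu]
    rw [← Finset.card_filter]
    exact hcard
  have hsumv : ∑ i, v i = (k : ℂ) := by rw [sum01 v hv, hcard]
  have hzp : ((2 * k + 1 : ℕ) : ZMod p) = 0 := (ZMod.natCast_eq_zero_iff _ p).2 hpn
  have hzq : ((2 * k + 1 : ℕ) : ZMod q) = 0 := (ZMod.natCast_eq_zero_iff _ q).2 hqn
  have hcastp : ∀ m : ℕ, ((m % (2 * k + 1) : ℕ) : ZMod p) = (m : ZMod p) := by
    intro m
    conv_rhs => rw [← Nat.div_add_mod m (2 * k + 1), Nat.cast_add, Nat.cast_mul, hzp,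
      zero_mul, zero_add]
  have hcastq : ∀ m : ℕ, ((m % (2 * k + 1) : ℕ) : ZMod q) = (m : ZMod q) := by
    intro m
    conv_rhs => rw [← Nat.div_add_mod m (2 * k + 1), Nat.cast_add, Nat.cast_mul, hzq,
      zero_mul, zero_add]
  -- the CRT bijection
  set E : Fin (2 * k + 1) → ZMod p × ZMod q :=
    fun i => ((i.val : ZMod p), (i.val : ZMod q)) with hE
  have hEadd : ∀ x y : Fin (2 * k + 1), E (x + y) = E x + E y := by
    intro x y
    rw [hE]
    simp only [Prod.mk_add_mk, Prod.mk.injEq]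
    constructor
    · rw [Fin.val_add, hcastp, Nat.cast_add]
    · rw [Fin.val_add, hcastq, Nat.cast_add]
  have hEsub : ∀ x y : Fin (2 * k + 1), E (x - y) = E x - E y := by
    intro x y
    have h1 : E (x - y) + E y = E x := by rw [← hEadd, sub_add_cancel]
    linear_combination (norm := module) h1
  have hEinj : Function.Injective E := by
    intro i j hij
    rw [hE] at hij
    simp only [Prod.mk.injEq] at hij
    have h1 : i.val ≡ j.val [MOD p] := (ZMod.natCast_eq_natCast_iff _ _ _).1 hij.1
    have h2 : i.val ≡ j.val [MOD q] := (ZMod.natCast_eq_natCast_iff _ _ _).1 hij.2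
    have h3 : i.val ≡ j.val [MOD p * q] :=
      (Nat.modEq_and_modEq_iff_modEq_mul hcop).1 ⟨h1, h2⟩
    have h4 : i.val % (p * q) = j.val % (p * q) := h3
    rw [Nat.mod_eq_of_lt (by rw [← hn]; exact i.isLt), Nat.mod_eq_of_lt (by rw [← hn]; exact j.isLt)] at h4
    exact Fin.ext h4
  have hEbij : Function.Bijective E := by
    rw [Fintype.bijective_iff_injective_and_card]
    refine ⟨hEinj, ?_⟩
    rw [Fintype.card_fin, Fintype.card_prod, ZMod.card, ZMod.card, hn]
  set eE : Fin (2 * k + 1) ≃ ZMod p × ZMod q := Equiv.ofBijective E hEbij with heE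
  have heEapp : ∀ i, eE i = E i := fun i => rfl
  -- the heart : no (2k+1)-th root of unity kills the symbol
  have heart : ∀ ζ : ℂ, ζ ^ (2 * k + 1) = 1 →
      ∑ m, v m * ζ ^ (m : Fin (2 * k + 1)).val ≠ 0 := by
    intro ζ hζ hF
    have hdvd : orderOf ζ ∣ 2 * k + 1 := orderOf_dvd_of_pow_eq_one hζ
    have hprim0 : IsPrimitiveRoot ζ (orderOf ζ) := IsPrimitiveRoot.orderOf ζ
    have hFu : ∑ m, (u m : ℂ) * ζ ^ (m : Fin (2 * k + 1)).val = 0 := by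
      rw [← hF]
      apply Finset.sum_congr rfl
      intro m _
      rw [hvu m]
    rw [hn] at hdvd
    rcases dvd_prime_mul hp hq hdvd with h1 | hcasep | hcaseq | hcasen
    · have hζ1 : ζ = 1 := orderOf_eq_one_iff.1 h1
      rw [hζ1] at hF
      simp only [one_pow, mul_one] at hF
      rw [hsumv] at hF
      exact hk.ne' (by exact_mod_cast hF)
    · have hdvdk : p ∣ k := by
        have := kml_prime_case hp u (hcasep ▸ hprim0) hFu
        rwa [hsumu] at this
      exact kml_dvd_contra hp hdvdk hpn
    · have hdvdk : q ∣ k := by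
        have := kml_prime_case hq u (hcaseq ▸ hprim0) hFu
        rwa [hsumu] at this
      exact kml_dvd_contra hq hdvdk hqn
    · -- ζ is a primitive (2k+1)-th root
      have hprimn : IsPrimitiveRoot ζ (2 * k + 1) := by
        rw [hn]
        exact hcasen ▸ hprim0
      have hFprim : ∀ ξ : ℂ, IsPrimitiveRoot ξ (2 * k + 1) →
          ∑ m, (u m : ℂ) * ξ ^ (m : Fin (2 * k + 1)).val = 0 :=
        fun ξ hξ => prim_transfer (by omega) u hprimn hξ hFu
      have hvanish : ∀ ξ : ℂ, ξ ^ (2 * k + 1) = 1 →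
          (∑ m, v m * ξ ^ (m : Fin (2 * k + 1)).val) * ((1 - ξ ^ p) * (1 - ξ ^ q)) = 0 := by
        intro ξ hξ
        have hordd : orderOf ξ ∣ p * q := by
          rw [← hn]
          exact orderOf_dvd_of_pow_eq_one hξ
        rcases dvd_prime_mul hp hq hordd with h1 | h1 | h1 | h1
        · have hxp : ξ ^ p = 1 := orderOf_dvd_iff_pow_eq_one.1 (h1 ▸ one_dvd p)
          rw [hxp]
          ring
        · have hxp : ξ ^ p = 1 := orderOf_dvd_iff_pow_eq_one.1 (h1 ▸ dvd_rfl)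
          rw [hxp]
          ring
        · have hxq : ξ ^ q = 1 := orderOf_dvd_iff_pow_eq_one.1 (h1 ▸ dvd_rfl)
          rw [hxq]
          ring
        · have hprimξ : IsPrimitiveRoot ξ (2 * k + 1) := by
            rw [hn]
            exact h1 ▸ IsPrimitiveRoot.orderOf ξ
          have hF0 : ∑ m, v m * ξ ^ (m : Fin (2 * k + 1)).val = 0 := by
            rw [Finset.sum_congr rfl (fun m (_ : m ∈ Finset.univ) => by rw [hvu m])]
            exact hFprim ξ hprimξ
          rw [hF0, zero_mul]
      set cp : Fin (2 * k + 1) := (p : Fin (2 * k + 1)) with hcpdef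
      set cq : Fin (2 * k + 1) := (q : Fin (2 * k + 1)) with hcqdef
      -- Fourier transform of the rectangle combination vanishes everywhere
      have hYhat : ∀ ξ : ℂ, ξ ^ (2 * k + 1) = 1 →
          ∑ j, (v j - v (j - cq) - v (j - cp) + v (j - cq - cp))
            * ξ ^ (j : Fin (2 * k + 1)).val = 0 := by
        intro ξ hξ
        have hxp : ξ ^ cp.val = ξ ^ p := by
          rw [hcpdef, Fin.val_natCast, pow_mod_helper hξ]
        have hxq : ξ ^ cq.val = ξ ^ q := by
          rw [hcqdef, Fin.val_natCast, pow_mod_helper hξ]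
        have r1 := rot_sum hξ v cq
        have r2 := rot_sum hξ v cp
        have r3 := rot_sum hξ v (cq + cp)
        have hsplit : ∑ j, (v j - v (j - cq) - v (j - cp) + v (j - cq - cp))
              * ξ ^ (j : Fin (2 * k + 1)).val
            = (∑ j, v j * ξ ^ (j : Fin (2 * k + 1)).val)
              - (∑ j, v (j - cq) * ξ ^ (j : Fin (2 * k + 1)).val)
              - (∑ j, v (j - cp) * ξ ^ (j : Fin (2 * k + 1)).val)
              + (∑ j, v (j - (cq + cp)) * ξ ^ (j : Fin (2 * k + 1)).val) := by
          rw [← Finset.sum_sub_distrib, ← Finset.sum_sub_distrib, ← Finset.sum_add_distrib]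
          apply Finset.sum_congr rfl
          intro j _
          rw [sub_sub j cq cp]
          ring
        rw [hsplit, r1, r2, r3, pow_val_add hξ cq cp, hxp, hxq]
        linear_combination hvanish ξ hξ
      have hy := kml_fourier_zero
        (fun j => v j - v (j - cq) - v (j - cp) + v (j - cq - cp)) hYhat
      have hrelFin : ∀ j : Fin (2 * k + 1),
          v j - v (j - cq) - v (j - cp) + v (j - cq - cp) = 0 :=
        fun j => congrFun hy j
      -- transfer to ZMod p × ZMod q
      have hEcp : E cp = (0, (p : ZMod q)) := by
        rw [hE]
        simp only [Prod.mk.injEq]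
        constructor
        · rw [hcpdef, Fin.val_natCast, hcastp, ZMod.natCast_self]
        · rw [hcpdef, Fin.val_natCast, hcastq]
      have hEcq : E cq = ((q : ZMod p), 0) := by
        rw [hE]
        simp only [Prod.mk.injEq]
        constructor
        · rw [hcqdef, Fin.val_natCast, hcastp]
        · rw [hcqdef, Fin.val_natCast, hcastq, ZMod.natCast_self]
      set V : ZMod p × ZMod q → ℂ := fun z => v (eE.symm z) with hV
      have hV01 : ∀ z, V z = 0 ∨ V z = 1 := fun z => hv (eE.symm z)
      have hVsum : ∑ z, V z = (k : ℂ) := by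
        rw [hV]
        rw [Equiv.sum_comp eE.symm v]
        exact hsumv
      have hrelV : ∀ (a : ZMod p) (b : ZMod q),
          V (a, b) - V (a - (q : ZMod p), b) - V (a, b - (p : ZMod q))
            + V (a - (q : ZMod p), b - (p : ZMod q)) = 0 := by
        intro a b
        set j : Fin (2 * k + 1) := eE.symm (a, b) with hj
        have hEj : E j = (a, b) := eE.apply_symm_apply (a, b)
        have e1 : eE.symm (a - (q : ZMod p), b) = j - cq := by
          rw [Equiv.symm_apply_eq, heEapp, hEsub, hEj, hEcq, Prod.mk_sub_mk, sub_zero]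
        have e2 : eE.symm (a, b - (p : ZMod q)) = j - cp := by
          rw [Equiv.symm_apply_eq, heEapp, hEsub, hEj, hEcp, Prod.mk_sub_mk, sub_zero]
        have e3 : eE.symm (a - (q : ZMod p), b - (p : ZMod q)) = j - cq - cp := by
          rw [Equiv.symm_apply_eq, heEapp, hEsub, hEsub, hEj, hEcq, hEcp, Prod.mk_sub_mk,
            Prod.mk_sub_mk, sub_zero, sub_zero]
        have := hrelFin j
        rw [hV]
        simp only
        rw [e1, e2, e3, ← hj]
        exact this
      exact kml_endgame hp hq hpq hn V hV01 hVsum hrelV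
  -- final reduction from the determinant
  obtain ⟨x, hx0, hxv⟩ := (Matrix.exists_mulVec_eq_zero_iff).2 hdet
  have hconv : ∀ ξ : ℂ, ξ ^ (2 * k + 1) = 1 →
      (∑ j, x j * ξ ^ (j : Fin (2 * k + 1)).val)
        * (∑ m, v m * ξ ^ (m : Fin (2 * k + 1)).val) = 0 := by
    intro ξ hξ
    have h1 : ∀ i : Fin (2 * k + 1), ∑ j, v (i - j) * x j = 0 := by
      intro i
      have := congrFun hxv i
      simpa [Matrix.mulVec, dotProduct, Matrix.circulant_apply] using this
    have h2 : ∑ i, ξ ^ (i : Fin (2 * k + 1)).val * (∑ j, v (i - j) * x j) = 0 :=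
      Finset.sum_eq_zero (fun i _ => by rw [h1 i, mul_zero])
    calc (∑ j, x j * ξ ^ (j : Fin (2 * k + 1)).val)
          * (∑ m, v m * ξ ^ (m : Fin (2 * k + 1)).val)
        = ∑ j, (x j * ξ ^ (j : Fin (2 * k + 1)).val)
            * (∑ m, v m * ξ ^ (m : Fin (2 * k + 1)).val) := by
          rw [Finset.sum_mul]
      _ = ∑ j, ∑ i, ξ ^ (i : Fin (2 * k + 1)).val * (v (i - j) * x j) := by
          apply Finset.sum_congr rfl
          intro j _
          calc x j * ξ ^ (j : Fin (2 * k + 1)).val * (∑ m, v m * ξ ^ (m : Fin (2 * k + 1)).val)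
              = x j * (ξ ^ (j : Fin (2 * k + 1)).val
                  * ∑ m, v m * ξ ^ (m : Fin (2 * k + 1)).val) := by ring
            _ = x j * ∑ i, v (i - j) * ξ ^ (i : Fin (2 * k + 1)).val := by
                rw [← rot_sum hξ v j]
            _ = ∑ i, ξ ^ (i : Fin (2 * k + 1)).val * (v (i - j) * x j) := by
                rw [Finset.mul_sum]
                apply Finset.sum_congr rfl
                intros
                ring
      _ = ∑ i, ξ ^ (i : Fin (2 * k + 1)).val * (∑ j, v (i - j) * x j) := by
          rw [Finset.sum_comm]
          apply Finset.sum_congr rfl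
          intro i _
          rw [Finset.mul_sum]
      _ = 0 := h2
  have hx : x = 0 := by
    apply kml_fourier_zero
    intro ξ hξ
    rcases mul_eq_zero.1 (hconv ξ hξ) with h | h
    · exact h
    · exact absurd h (heart ξ hξ)
  exact hx0 hx
end

section
/- Let p be a prime, e a positive integer, n = p^e, and ζ = exp(2πi/n) ∈ ℂ. If S is a finite set of complex numbers with z^n = 1 for all z ∈ S and ∑_{z ∈ S} z = 0, then S is a disjoint union of p-orbits: there exists a set B ⊆ {0, 1, …, p^(e−1) − 1} such that S equals the union over β ∈ B of the sets {ζ^(β + s·p^(e−1)) : s = 0, 1, …, p−1}. -/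
open Complex

private lemma sum_range_mul_eq' {M : Type*} [AddCommMonoid M] (a b : ℕ) (ha : 0 < a) (f : ℕ → M) :
    ∑ k ∈ Finset.range (a * b), f k
      = ∑ β ∈ Finset.range a, ∑ s ∈ Finset.range b, f (β + s * a) := by
  induction b with
  | zero => simp
  | succ b ih =>
    rw [Nat.mul_succ, Finset.sum_range_add, ih]
    have hstep : ∀ β ∈ Finset.range a, ∑ s ∈ Finset.range (b + 1), f (β + s * a)
        = (∑ s ∈ Finset.range b, f (β + s * a)) + f (β + b * a) :=
      fun β _ => Finset.sum_range_succ _ _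
    rw [Finset.sum_congr rfl hstep, Finset.sum_add_distrib]
    congr 1
    refine Finset.sum_congr rfl fun x _ => ?_
    exact congrArg f (by ring)

private lemma coeff_zero_of_sum_eq_zero' {n : ℕ} (hn : 0 < n) {ζ : ℂ}
    (hprim : IsPrimitiveRoot ζ n) (c : ℕ → ℚ)
    (h : ∑ j ∈ Finset.range n.totient, (c j : ℂ) * ζ ^ j = 0) :
    ∀ j < n.totient, c j = 0 := by
  set d := n.totient with hd
  set q : Polynomial ℚ := ∑ j ∈ Finset.range d, Polynomial.C (c j) * Polynomial.X ^ j with hq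
  have hcoeff : ∀ j < d, q.coeff j = c j := by
    intro j hj
    rw [hq, Polynomial.finset_sum_coeff, Finset.sum_eq_single j]
    · simp
    · intro b _ hbj; simp [Polynomial.coeff_C_mul, Polynomial.coeff_X_pow, Ne.symm hbj]
    · intro hj'; exact absurd (Finset.mem_range.mpr hj) hj'
  have haev : Polynomial.aeval ζ q = 0 := by
    rw [hq, map_sum]
    simpa using h
  have hq0 : q = 0 := by
    by_contra h0
    have hdvd : minpoly ℚ ζ ∣ q := minpoly.dvd ℚ ζ haev
    have hdeg : d ≤ q.natDegree := by
      have := Polynomial.natDegree_le_of_dvd hdvd h0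
      rwa [← Polynomial.cyclotomic_eq_minpoly_rat hprim hn,
        Polynomial.natDegree_cyclotomic] at this
    have hdpos : 0 < d := Nat.totient_pos.mpr hn
    have h2 : q.natDegree ≤ d - 1 := by
      rw [hq]
      refine Polynomial.natDegree_sum_le_of_forall_le _ _ (fun j hj => ?_)
      exact le_trans (Polynomial.natDegree_C_mul_X_pow_le _ _)
        (Nat.le_sub_one_of_lt (Finset.mem_range.mp hj))
    omega
  intro j hj
  have := hcoeff j hj
  rw [hq0] at this
  simpa using this.symm

/-- Conjecture 1 of the paper in the prime-power case `n = p^e` (proved in the paper):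
if a set `S` of `n`-th roots of unity has sum `0`, then `S` is a (disjoint) union of
`p`-orbits `{ζ^(β + s·p^(e−1)) : s = 0,…,p−1}` with offsets `β ∈ B ⊆ {0,…,p^(e−1)−1}`. -/
theorem zero_sum_roots_union_orbits_prime_pow (p e : ℕ) (hp : Nat.Prime p) (he : 0 < e)
    (n : ℕ) (hn : n = p ^ e)
    (ζ : ℂ) (hζ : ζ = Complex.exp (2 * Real.pi * Complex.I / n))
    (S : Finset ℂ) (hS : ∀ z ∈ S, z ^ n = 1) (hsum : ∑ z ∈ S, z = 0) :
    ∃ B ⊆ Finset.range (p ^ (e - 1)),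
      S = B.biUnion (fun β => (Finset.range p).image (fun s => ζ ^ (β + s * p ^ (e - 1)))) := by
  set m := p ^ (e - 1) with hm
  have hp1 : 1 < p := hp.one_lt
  have hm0 : 0 < m := pow_pos hp.pos _
  have hnm : n = m * p := by
    rw [hn, hm, ← pow_succ]
    congr 1
    omega
  have hn0 : 0 < n := by rw [hn]; positivity
  haveI : NeZero n := ⟨hn0.ne'⟩
  have hprim : IsPrimitiveRoot ζ n := by
    rw [hζ]; exact Complex.isPrimitiveRoot_exp n hn0.ne'
  set a : ℕ → ℚ := fun k => if ζ ^ k ∈ S then 1 else 0 with ha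
  -- the sum over S as an indicator-weighted sum over all n-th roots
  have hSsum : ∑ k ∈ Finset.range n, (a k : ℂ) * ζ ^ k = ∑ z ∈ S, z := by
    have h1 : ∑ k ∈ Finset.range n, (a k : ℂ) * ζ ^ k
        = ∑ k ∈ (Finset.range n).filter (fun k => ζ ^ k ∈ S), ζ ^ k := by
      rw [Finset.sum_filter]
      refine Finset.sum_congr rfl fun k _ => ?_
      by_cases h : ζ ^ k ∈ S <;> simp [ha, h]
    rw [h1]
    refine Finset.sum_bij (fun k _ => ζ ^ k) ?_ ?_ ?_ ?_
    · intro k hk; exact (Finset.mem_filter.mp hk).2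
    · intro i hi j hj hij
      exact hprim.pow_inj (Finset.mem_range.mp (Finset.mem_filter.mp hi).1)
        (Finset.mem_range.mp (Finset.mem_filter.mp hj).1) hij
    · intro z hz
      obtain ⟨i, hi, hzi⟩ := hprim.eq_pow_of_pow_eq_one (hS z hz)
      exact ⟨i, Finset.mem_filter.mpr ⟨Finset.mem_range.mpr hi, by rwa [hzi]⟩, hzi⟩
    · intro k _; rfl
  have h0 : ∑ β ∈ Finset.range m, ∑ s ∈ Finset.range p,
      (a (β + s * m) : ℂ) * ζ ^ (β + s * m) = 0 := by
    have H := sum_range_mul_eq' m p hm0 (fun k => (a k : ℂ) * ζ ^ k)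
    rw [← hnm, hSsum, hsum] at H
    exact H.symm
  -- replace the inner sum by a sum of differences over range (p-1)
  set μ : ℂ := ζ ^ m with hμdef
  have hμ : IsPrimitiveRoot μ p := hprim.pow hn0 hnm
  have hgeom : ∑ s ∈ Finset.range p, μ ^ s = 0 := hμ.geom_sum_eq_zero hp1
  set c : ℕ → ℕ → ℚ := fun β s => a (β + s * m) - a (β + (p - 1) * m) with hc
  have hzeta : ∀ β s : ℕ, ζ ^ (β + s * m) = ζ ^ β * μ ^ s := by
    intro β s
    rw [pow_add, mul_comm s m, pow_mul]
  have hinner : ∀ β, ∑ s ∈ Finset.range p, (a (β + s * m) : ℂ) * ζ ^ (β + s * m)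
      = ∑ s ∈ Finset.range (p - 1), (c β s : ℂ) * ζ ^ (β + s * m) := by
    intro β
    calc ∑ s ∈ Finset.range p, (a (β + s * m) : ℂ) * ζ ^ (β + s * m)
        = ∑ s ∈ Finset.range p, (c β s : ℂ) * ζ ^ (β + s * m)
            + (a (β + (p - 1) * m) : ℂ) * ζ ^ β * ∑ s ∈ Finset.range p, μ ^ s := by
          rw [Finset.mul_sum, ← Finset.sum_add_distrib]
          refine Finset.sum_congr rfl fun s _ => ?_
          rw [hzeta β s, hc]
          push_cast
          ring
      _ = ∑ s ∈ Finset.range p, (c β s : ℂ) * ζ ^ (β + s * m) := by rw [hgeom]; ring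
      _ = ∑ s ∈ Finset.range (p - 1), (c β s : ℂ) * ζ ^ (β + s * m) := by
          refine (Finset.sum_subset (Finset.range_subset_range.mpr (by omega)) ?_).symm
          intro s hs hs'
          rw [Finset.mem_range] at hs hs'
          have hse : s = p - 1 := by omega
          simp [hse, hc]
  have h1 : ∑ β ∈ Finset.range m, ∑ s ∈ Finset.range (p - 1),
      (c β s : ℂ) * ζ ^ (β + s * m) = 0 := by
    rw [← h0]
    exact (Finset.sum_congr rfl fun β _ => (hinner β).symm)
  -- single-index coefficients
  set c' : ℕ → ℚ := fun j => c (j % m) (j / m) with hc'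
  have hidx : ∀ β < m, ∀ s : ℕ, c' (β + s * m) = c β s := by
    intro β hβ s
    have e1 : (β + s * m) % m = β := by
      rw [Nat.add_mul_mod_self_right, Nat.mod_eq_of_lt hβ]
    have e2 : (β + s * m) / m = s := by
      rw [Nat.add_mul_div_right _ _ hm0, Nat.div_eq_of_lt hβ, zero_add]
    simp only [hc']
    rw [e1, e2]
  have htot : n.totient = m * (p - 1) := by
    rw [hn, Nat.totient_prime_pow hp he, hm]
  have h2 : ∑ j ∈ Finset.range n.totient, (c' j : ℂ) * ζ ^ j = 0 := by
    rw [htot, sum_range_mul_eq' m (p - 1) hm0, ← h1]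
    refine Finset.sum_congr rfl fun β hβ => Finset.sum_congr rfl fun s _ => ?_
    show (c' (β + s * m) : ℂ) * ζ ^ (β + s * m) = _
    rw [hidx β (Finset.mem_range.mp hβ) s]
  have hc0 : ∀ β < m, ∀ s < p - 1, c β s = 0 := by
    intro β hβ s hs
    have hj : β + s * m < n.totient := by
      rw [htot]
      have h1' : s + 1 ≤ p - 1 := by omega
      have h2' : (s + 1) * m ≤ (p - 1) * m := Nat.mul_le_mul_right m h1'
      have h3' : β + s * m < (s + 1) * m := by rw [add_mul, one_mul]; omega
      exact lt_of_lt_of_le h3' (h2'.trans_eq (mul_comm _ _))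
    have := coeff_zero_of_sum_eq_zero' hn0 hprim c' h2 _ hj
    rwa [hidx β hβ s] at this
  -- all-or-nothing for each orbit
  have key : ∀ β < m, ∀ s < p, a (β + s * m) = a β := by
    intro β hβ s hs
    have hall : ∀ s' < p, a (β + s' * m) = a (β + (p - 1) * m) := by
      intro s' hs'
      rcases eq_or_lt_of_le (Nat.lt_succ_iff.mp (by omega : s' < (p-1)+1)) with h | h
      · rw [h]
      · exact sub_eq_zero.mp (hc0 β hβ s' h)
    have h0' : a (β + 0 * m) = a (β + (p - 1) * m) := hall 0 (by omega)
    rw [zero_mul, add_zero] at h0'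
    rw [hall s hs, ← h0']
  have key2 : ∀ β < m, ∀ s < p, (ζ ^ (β + s * m) ∈ S ↔ ζ ^ β ∈ S) := by
    intro β hβ s hs
    have h := key β hβ s hs
    simp only [ha] at h
    by_cases h1 : ζ ^ (β + s * m) ∈ S <;> by_cases h2 : ζ ^ β ∈ S <;>
      simp [h1, h2] at h ⊢
  -- conclude
  refine ⟨(Finset.range m).filter (fun β => ζ ^ β ∈ S), Finset.filter_subset _ _, ?_⟩
  ext z
  simp only [Finset.mem_biUnion, Finset.mem_image, Finset.mem_filter, Finset.mem_range]
  constructor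
  · intro hz
    obtain ⟨k, hk, hzk⟩ := hprim.eq_pow_of_pow_eq_one (hS z hz)
    have hβlt : k % m < m := Nat.mod_lt _ hm0
    have hslt : k / m < p := Nat.div_lt_of_lt_mul (by rwa [← hnm])
    have hdiv : k % m + (k / m) * m = k := Nat.mod_add_div' k m
    have hmem : ζ ^ (k % m + (k / m) * m) ∈ S := by rw [hdiv, hzk]; exact hz
    exact ⟨k % m, ⟨hβlt, (key2 _ hβlt _ hslt).mp hmem⟩, k / m, hslt, by rw [hdiv, hzk]⟩
  · rintro ⟨β, ⟨hβ, hβS⟩, s, hs, rfl⟩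
    exact (key2 β hβ s hs).mpr hβS
end

section
/- Let p and q be distinct primes, n = p·q, and ζ = exp(2πi/n) ∈ ℂ. If S is a finite set of complex numbers with z^n = 1 for all z ∈ S and ∑_{z ∈ S} z = 0, then S is a disjoint union of p-orbits and q-orbits: there exist sets Bp ⊆ {0,…,q−1} and Bq ⊆ {0,…,p−1} such that, writing Sp = ⋃_{β ∈ Bp} {ζ^(β + s·q) : s = 0,…,p−1} and Sq = ⋃_{β ∈ Bq} {ζ^(β + s·p) : s = 0,…,q−1}, the sets Sp and Sq are disjoint and S = Sp ∪ Sq. (Conjecture 1 of the paper in the case n = pq, which the paper proves.) -/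
open Finset Polynomial

/-- Indicator (in `ℂ`) that `ζ^k ∈ S`. -/
private noncomputable def zsInd (S : Finset ℂ) (ζ : ℂ) (k : ℕ) : ℂ :=
  if ζ ^ k ∈ S then 1 else 0

/-- The key "rectangle" identity for indicators coming from the vanishing sum. -/
private theorem zsRect (p q : ℕ) (hp : Nat.Prime p) (hq : Nat.Prime q) (hpq : p ≠ q)
    (n : ℕ) (hn : n = p * q) (ζ : ℂ) (hprim : IsPrimitiveRoot ζ n)
    (S : Finset ℂ) (hS : ∀ z ∈ S, z ^ n = 1) (hsum : ∑ z ∈ S, z = 0)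
    (k1 k2 k3 k4 : ℕ) (h1 : k1 < n) (h2 : k2 < n) (h3 : k3 < n) (h4 : k4 < n)
    (c12 : k1 % p = k2 % p) (c34 : k3 % p = k4 % p)
    (c13 : k1 % q = k3 % q) (c24 : k2 % q = k4 % q) :
    zsInd S ζ k1 + zsInd S ζ k4 = zsInd S ζ k2 + zsInd S ζ k3 := by
  classical
  have hn0 : n ≠ 0 := by
    rw [hn]; exact Nat.mul_ne_zero hp.pos.ne' hq.pos.ne'
  have hnpos : 0 < n := Nat.pos_of_ne_zero hn0
  haveI : NeZero n := ⟨hn0⟩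
  have hζ0 : ζ ≠ 0 := hprim.ne_zero hn0
  have hζn : ζ ^ n = 1 := hprim.pow_eq_one
  have hnC : (n : ℂ) ≠ 0 := Nat.cast_ne_zero.mpr hn0
  set a : ℕ → ℂ := zsInd S ζ with ha
  set E : ℕ → ℂ := fun t => ∑ k ∈ range n, a k * ζ ^ (t * k) with hE
  -- the basic vanishing sum
  have hsum' : ∀ w : ℂ, ∑ k ∈ range n, a k * w ^ k
      = ∑ k ∈ (range n).filter (fun k => ζ ^ k ∈ S), w ^ k := by
    intro w
    rw [Finset.sum_filter]
    refine Finset.sum_congr rfl fun k _ => ?_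
    simp only [ha, zsInd]
    split <;> simp
  have himg : ((range n).filter (fun k => ζ ^ k ∈ S)).image (fun k => ζ ^ k) = S := by
    ext z
    simp only [Finset.mem_image, Finset.mem_filter, Finset.mem_range]
    constructor
    · rintro ⟨k, ⟨-, hk⟩, rfl⟩; exact hk
    · intro hz
      obtain ⟨k, hk, rfl⟩ := hprim.eq_pow_of_pow_eq_one (hS z hz)
      exact ⟨k, ⟨hk, hz⟩, rfl⟩
  have hvan : ∑ k ∈ range n, a k * ζ ^ k = 0 := by
    rw [hsum']
    have hinj : ∀ x ∈ (range n).filter (fun k => ζ ^ k ∈ S),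
        ∀ y ∈ (range n).filter (fun k => ζ ^ k ∈ S), ζ ^ x = ζ ^ y → x = y := by
      intro x hx y hy hxy
      exact hprim.pow_inj (Finset.mem_range.mp (Finset.mem_filter.mp hx).1)
        (Finset.mem_range.mp (Finset.mem_filter.mp hy).1) hxy
    calc ∑ k ∈ (range n).filter (fun k => ζ ^ k ∈ S), ζ ^ k
        = ∑ z ∈ ((range n).filter (fun k => ζ ^ k ∈ S)).image (fun k => ζ ^ k), z := by
          rw [Finset.sum_image hinj]
      _ = ∑ z ∈ S, z := by rw [himg]
      _ = 0 := hsum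
  -- vanishing for all exponents coprime to n
  have hEt : ∀ t : ℕ, Nat.Coprime t n → E t = 0 := by
    intro t ht
    set f : ℚ[X] := ∑ k ∈ range n, if ζ ^ k ∈ S then (X : ℚ[X]) ^ k else 0 with hf
    have haeval : ∀ w : ℂ, aeval w f = ∑ k ∈ range n, a k * w ^ k := by
      intro w
      rw [hf, map_sum]
      refine Finset.sum_congr rfl fun k _ => ?_
      simp only [ha, zsInd]
      split <;> simp
    have h0 : aeval ζ f = 0 := by rw [haeval, hvan]
    have hdvd : minpoly ℚ ζ ∣ f := minpoly.dvd ℚ ζ h0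
    have hprim' : IsPrimitiveRoot (ζ ^ t) n := hprim.pow_of_coprime t ht
    have hmin : minpoly ℚ ζ = cyclotomic n ℚ :=
      (cyclotomic_eq_minpoly_rat hprim hnpos).symm
    have hmin' : minpoly ℚ (ζ ^ t) = cyclotomic n ℚ :=
      (cyclotomic_eq_minpoly_rat hprim' hnpos).symm
    obtain ⟨g, hg⟩ := hdvd
    have h0' : aeval (ζ ^ t) f = 0 := by
      rw [hg, map_mul, hmin, ← hmin', minpoly.aeval, zero_mul]
    rw [hE]
    calc ∑ k ∈ range n, a k * ζ ^ (t * k)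
        = ∑ k ∈ range n, a k * (ζ ^ t) ^ k := by
          refine Finset.sum_congr rfl fun k _ => ?_
          rw [pow_mul]
      _ = aeval (ζ ^ t) f := (haeval _).symm
      _ = 0 := h0'
  -- orthogonality
  have horth : ∀ k k' : ℕ, k < n → k' < n →
      ∑ t ∈ range n, ζ ^ (t * k') * (ζ ^ (t * k))⁻¹ = if k' = k then (n : ℂ) else 0 := by
    intro k k' hk hk'
    have hterm : ∀ t : ℕ, ζ ^ (t * k') * (ζ ^ (t * k))⁻¹ = (ζ ^ k' * (ζ ^ k)⁻¹) ^ t := by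
      intro t
      rw [mul_comm t k', mul_comm t k, pow_mul, pow_mul, mul_pow, inv_pow]
    simp only [hterm]
    by_cases hkk : k' = k
    · subst hkk
      rw [if_pos rfl]
      rw [mul_inv_cancel₀ (pow_ne_zero _ hζ0)]
      simp
    · rw [if_neg hkk]
      have hz1 : ζ ^ k' * (ζ ^ k)⁻¹ ≠ 1 := by
        intro h
        apply hkk
        apply hprim.pow_inj hk' hk
        field_simp at h
        exact h
      have hzn : (ζ ^ k' * (ζ ^ k)⁻¹) ^ n = 1 := by
        rw [mul_pow, inv_pow, ← pow_mul, ← pow_mul, mul_comm k' n, mul_comm k n,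
          pow_mul, pow_mul, hζn, one_pow, one_pow]
        simp
      rw [geom_sum_eq hz1, hzn, sub_self, zero_div]
  -- Fourier inversion
  have hinv : ∀ k : ℕ, k < n →
      ∑ t ∈ range n, E t * (ζ ^ (t * k))⁻¹ = (n : ℂ) * a k := by
    intro k hk
    calc ∑ t ∈ range n, E t * (ζ ^ (t * k))⁻¹
        = ∑ t ∈ range n, ∑ k' ∈ range n, a k' * (ζ ^ (t * k') * (ζ ^ (t * k))⁻¹) := by
          refine Finset.sum_congr rfl fun t _ => ?_
          rw [hE, Finset.sum_mul]
          refine Finset.sum_congr rfl fun k' _ => ?_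
          ring
      _ = ∑ k' ∈ range n, ∑ t ∈ range n, a k' * (ζ ^ (t * k') * (ζ ^ (t * k))⁻¹) :=
          Finset.sum_comm
      _ = ∑ k' ∈ range n, a k' * (if k' = k then (n : ℂ) else 0) := by
          refine Finset.sum_congr rfl fun k' _ => ?_
          rw [← Finset.mul_sum, horth k k' hk (Finset.mem_range.mp ‹k' ∈ range n›)]
      _ = (n : ℂ) * a k := by
          rw [Finset.sum_congr rfl (fun k' _ => mul_ite (k' = k) (a k') ((n : ℂ)) 0)]
          simp only [mul_zero]
          rw [Finset.sum_ite_eq' (range n) k (fun k' => a k' * (n : ℂ))]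
          rw [if_pos (Finset.mem_range.mpr hk), mul_comm]
  -- residue trichotomy
  have htri : ∀ t : ℕ, ¬ Nat.Coprime t n → p ∣ t ∨ q ∣ t := by
    intro t ht
    by_contra hcon
    push_neg at hcon
    apply ht
    rw [hn]
    exact Nat.Coprime.mul_right ((hp.coprime_iff_not_dvd.mpr hcon.1).symm)
      ((hq.coprime_iff_not_dvd.mpr hcon.2).symm)
  have hmodpow : ∀ A : ℕ, ζ ^ A = ζ ^ (A % n) := by
    intro A
    conv_lhs => rw [← Nat.div_add_mod A n]
    rw [pow_add, pow_mul, hζn, one_pow, one_mul]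
  have hpowEq : ∀ A B : ℕ, A ≡ B [MOD n] → ζ ^ A = ζ ^ B := by
    intro A B h
    rw [hmodpow A, hmodpow B, h]
  -- the main computation
  have hzero : ∑ t ∈ range n,
      E t * ((ζ ^ (t * k1))⁻¹ + (ζ ^ (t * k4))⁻¹ - (ζ ^ (t * k2))⁻¹ - (ζ ^ (t * k3))⁻¹) = 0 := by
    refine Finset.sum_eq_zero fun t _ => ?_
    by_cases hct : Nat.Coprime t n
    · rw [hEt t hct, zero_mul]
    · rcases htri t hct with ⟨s, rfl⟩ | ⟨s, rfl⟩
      · have e13 : ζ ^ (p * s * k1) = ζ ^ (p * s * k3) := by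
          apply hpowEq
          rw [hn, mul_assoc, mul_assoc]
          exact Nat.ModEq.mul_left' p (Nat.ModEq.mul_left s c13)
        have e24 : ζ ^ (p * s * k2) = ζ ^ (p * s * k4) := by
          apply hpowEq
          rw [hn, mul_assoc, mul_assoc]
          exact Nat.ModEq.mul_left' p (Nat.ModEq.mul_left s c24)
        rw [e13, e24]; ring
      · have e12 : ζ ^ (q * s * k1) = ζ ^ (q * s * k2) := by
          apply hpowEq
          rw [hn, mul_comm p q, mul_assoc, mul_assoc]
          exact Nat.ModEq.mul_left' q (Nat.ModEq.mul_left s c12)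
        have e34 : ζ ^ (q * s * k3) = ζ ^ (q * s * k4) := by
          apply hpowEq
          rw [hn, mul_comm p q, mul_assoc, mul_assoc]
          exact Nat.ModEq.mul_left' q (Nat.ModEq.mul_left s c34)
        rw [e12, e34]; ring
  have hexp : ∑ t ∈ range n, (E t * (ζ ^ (t * k1))⁻¹ + E t * (ζ ^ (t * k4))⁻¹
      - E t * (ζ ^ (t * k2))⁻¹ - E t * (ζ ^ (t * k3))⁻¹) = 0 := by
    rw [← hzero]
    refine Finset.sum_congr rfl fun t _ => ?_
    ring
  rw [Finset.sum_sub_distrib, Finset.sum_sub_distrib, Finset.sum_add_distrib,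
    hinv k1 h1, hinv k4 h4, hinv k2 h2, hinv k3 h3] at hexp
  have key : (n : ℂ) * (a k1 + a k4) = (n : ℂ) * (a k2 + a k3) := by
    linear_combination hexp
  exact mul_left_cancel₀ hnC key

/-- Prop-level rectangle: propagate a mixed pair. -/
private theorem zsRectP (p q : ℕ) (hp : Nat.Prime p) (hq : Nat.Prime q) (hpq : p ≠ q)
    (n : ℕ) (hn : n = p * q) (ζ : ℂ) (hprim : IsPrimitiveRoot ζ n)
    (S : Finset ℂ) (hS : ∀ z ∈ S, z ^ n = 1) (hsum : ∑ z ∈ S, z = 0)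
    (k1 k2 k3 k4 : ℕ) (h1 : k1 < n) (h2 : k2 < n) (h3 : k3 < n) (h4 : k4 < n)
    (c12 : k1 % p = k2 % p) (c34 : k3 % p = k4 % p)
    (c13 : k1 % q = k3 % q) (c24 : k2 % q = k4 % q)
    (hm1 : ζ ^ k1 ∈ S) (hm3 : ζ ^ k3 ∉ S) : ζ ^ k2 ∈ S ∧ ζ ^ k4 ∉ S := by
  have hkey := zsRect p q hp hq hpq n hn ζ hprim S hS hsum k1 k2 k3 k4 h1 h2 h3 h4 c12 c34 c13 c24
  simp only [zsInd, if_pos hm1, if_neg hm3] at hkey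
  by_cases h2' : ζ ^ k2 ∈ S <;> by_cases h4' : ζ ^ k4 ∈ S
  · exfalso; norm_num [h2', h4'] at hkey
  · exact ⟨h2', h4'⟩
  · exfalso; norm_num [h2', h4'] at hkey
  · exfalso; norm_num [h2', h4'] at hkey

/-- Prop-level rectangle: equal rows. -/
private theorem zsRectEq (p q : ℕ) (hp : Nat.Prime p) (hq : Nat.Prime q) (hpq : p ≠ q)
    (n : ℕ) (hn : n = p * q) (ζ : ℂ) (hprim : IsPrimitiveRoot ζ n)
    (S : Finset ℂ) (hS : ∀ z ∈ S, z ^ n = 1) (hsum : ∑ z ∈ S, z = 0)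
    (k1 k2 k3 k4 : ℕ) (h1 : k1 < n) (h2 : k2 < n) (h3 : k3 < n) (h4 : k4 < n)
    (c12 : k1 % p = k2 % p) (c34 : k3 % p = k4 % p)
    (c13 : k1 % q = k3 % q) (c24 : k2 % q = k4 % q)
    (hm3 : ζ ^ k3 ∈ S) (hm4 : ζ ^ k4 ∈ S) : (ζ ^ k1 ∈ S ↔ ζ ^ k2 ∈ S) := by
  have hkey := zsRect p q hp hq hpq n hn ζ hprim S hS hsum k1 k2 k3 k4 h1 h2 h3 h4 c12 c34 c13 c24
  simp only [zsInd, if_pos hm3, if_pos hm4] at hkey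
  by_cases h1' : ζ ^ k1 ∈ S <;> by_cases h2' : ζ ^ k2 ∈ S
  · exact iff_of_true h1' h2'
  · exfalso; norm_num [h1', h2'] at hkey
  · exfalso; norm_num [h1', h2'] at hkey
  · exact iff_of_false h1' h2'

/-- If membership only depends on the residue mod `q`, then `S` is the union of the
corresponding `p`-orbits. -/
private theorem zsUnion (p q n : ℕ) (hp : 0 < p) (hq : 0 < q) (hn : n = p * q)
    (ζ : ℂ) (hprim : IsPrimitiveRoot ζ n)
    (S : Finset ℂ) (hS : ∀ z ∈ S, z ^ n = 1)
    (hconst : ∀ k k' : ℕ, k < n → k' < n → k % q = k' % q → (ζ ^ k ∈ S ↔ ζ ^ k' ∈ S)) :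
    S = ((range q).filter (fun β => ζ ^ β ∈ S)).biUnion
      (fun β => (range p).image (fun s => ζ ^ (β + s * q))) := by
  classical
  have hn0 : n ≠ 0 := by rw [hn]; positivity
  have hnpos : 0 < n := Nat.pos_of_ne_zero hn0
  haveI : NeZero n := ⟨hn0⟩
  have hqn : q ≤ n := by rw [hn]; exact Nat.le_mul_of_pos_left q hp
  ext z
  simp only [Finset.mem_biUnion, Finset.mem_filter, Finset.mem_range, Finset.mem_image]
  constructor
  · intro hz
    obtain ⟨k, hk, rfl⟩ := hprim.eq_pow_of_pow_eq_one (hS z hz)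
    refine ⟨k % q, ⟨Nat.mod_lt _ hq, ?_⟩, k / q, ?_, ?_⟩
    · exact (hconst (k % q) k (lt_of_lt_of_le (Nat.mod_lt _ hq) hqn) hk
        (Nat.mod_mod_of_dvd k dvd_rfl)).mpr hz
    · have hkqp : k < q * p := by rw [mul_comm]; exact hn ▸ hk
      exact Nat.div_lt_of_lt_mul hkqp
    · rw [Nat.mod_add_div' k q]
  · rintro ⟨β, ⟨hβ, hβS⟩, s, hs, rfl⟩
    have hk : β + s * q < n := by
      rw [hn]
      calc β + s * q < q + s * q := by omega
        _ = (s + 1) * q := by ring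
        _ ≤ p * q := Nat.mul_le_mul_right q hs
    exact (hconst (β + s * q) β hk (lt_of_lt_of_le hβ hqn)
      (Nat.add_mul_mod_self_right β s q)).mpr hβS

/-- Conjecture 1 of the paper in the case `n = p·q` with `p, q` distinct primes
(proved in the paper): if a set `S` of `n`-th roots of unity has sum `0`, then `S`
is a disjoint union of `p`-orbits `{ζ^(β + s·q) : s = 0,…,p−1}` (with offsets in
`Bp ⊆ {0,…,q−1}`) and `q`-orbits `{ζ^(β + s·p) : s = 0,…,q−1}` (with offsets in
`Bq ⊆ {0,…,p−1}`). -/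
theorem zero_sum_roots_union_orbits_two_primes (p q : ℕ)
    (hp : Nat.Prime p) (hq : Nat.Prime q) (hpq : p ≠ q)
    (n : ℕ) (hn : n = p * q)
    (ζ : ℂ) (hζ : ζ = Complex.exp (2 * Real.pi * Complex.I / n))
    (S : Finset ℂ) (hS : ∀ z ∈ S, z ^ n = 1) (hsum : ∑ z ∈ S, z = 0) :
    ∃ Bp ⊆ Finset.range q, ∃ Bq ⊆ Finset.range p,
      Disjoint
        (Bp.biUnion (fun β => (Finset.range p).image (fun s => ζ ^ (β + s * q))))
        (Bq.biUnion (fun β => (Finset.range q).image (fun s => ζ ^ (β + s * p)))) ∧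
      S = (Bp.biUnion (fun β => (Finset.range p).image (fun s => ζ ^ (β + s * q)))) ∪
          (Bq.biUnion (fun β => (Finset.range q).image (fun s => ζ ^ (β + s * p)))) := by
  classical
  have hn0 : n ≠ 0 := by rw [hn]; exact Nat.mul_ne_zero hp.pos.ne' hq.pos.ne'
  have hnpos : 0 < n := Nat.pos_of_ne_zero hn0
  have hprim : IsPrimitiveRoot ζ n := hζ ▸ Complex.isPrimitiveRoot_exp n hn0
  have hcop : Nat.Coprime p q := (Nat.coprime_primes hp hq).mpr hpq
  have hpn : p ≤ n := by rw [hn]; exact Nat.le_mul_of_pos_right p hq.pos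
  have hqn : q ≤ n := by rw [hn]; exact Nat.le_mul_of_pos_left q hp.pos
  -- CRT
  have hcrt : ∀ a b : ℕ, ∃ k, k < n ∧ k % p = a % p ∧ k % q = b % q := by
    intro a b
    obtain ⟨x, hx1, hx2⟩ := Nat.chineseRemainder hcop a b
    refine ⟨x % n, Nat.mod_lt _ hnpos, ?_, ?_⟩
    · rw [Nat.mod_mod_of_dvd x ⟨q, hn⟩]; exact hx1
    · rw [Nat.mod_mod_of_dvd x ⟨p, by rw [hn, mul_comm]⟩]; exact hx2
  by_cases hcase : ∀ k k' : ℕ, k < n → k' < n → k % q = k' % q → (ζ ^ k ∈ S ↔ ζ ^ k' ∈ S)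
  · -- all "columns" constant: union of p-orbits
    refine ⟨(range q).filter (fun β => ζ ^ β ∈ S), Finset.filter_subset _ _, ∅,
      Finset.empty_subset _, ?_, ?_⟩
    · simp
    · rw [Finset.biUnion_empty, Finset.union_empty]
      exact zsUnion p q n hp.pos hq.pos hn ζ hprim S hS hcase
  · -- there is a mixed column: all "rows" are constant, union of q-orbits
    push_neg at hcase
    obtain ⟨u, v, hu, hv, huv, hne⟩ := hcase
    -- extract a mixed pair (ka ∈ S, kb ∉ S) with ka ≡ kb mod q
    have hmix : ∃ ka kb : ℕ, ka < n ∧ kb < n ∧ ka % q = kb % q ∧ ζ ^ ka ∈ S ∧ ζ ^ kb ∉ S := by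
      rcases hne with ⟨hA, hB⟩ | ⟨hA, hB⟩
      · exact ⟨u, v, hu, hv, huv, hA, hB⟩
      · exact ⟨v, u, hv, hu, huv.symm, hB, hA⟩
    obtain ⟨ka, kb, hka, hkb, hab, hmema, hmemb⟩ := hmix
    have hrow : ∀ k k' : ℕ, k < n → k' < n → k % p = k' % p → (ζ ^ k ∈ S ↔ ζ ^ k' ∈ S) := by
      intro k k' hk hk' hkk'
      obtain ⟨c, hc, hc1, hc2⟩ := hcrt ka k
      obtain ⟨d, hd, hd1, hd2⟩ := hcrt kb k
      obtain ⟨c', hc', hc1', hc2'⟩ := hcrt ka k'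
      obtain ⟨d', hd', hd1', hd2'⟩ := hcrt kb k'
      -- first rectangle: (ka, c, kb, d)
      have hstep : ζ ^ c ∈ S ∧ ζ ^ d ∉ S :=
        zsRectP p q hp hq hpq n hn ζ hprim S hS hsum ka c kb d hka hc hkb hd
          hc1.symm hd1.symm hab (hc2.trans hd2.symm) hmema hmemb
      have hstep' : ζ ^ c' ∈ S ∧ ζ ^ d' ∉ S :=
        zsRectP p q hp hq hpq n hn ζ hprim S hS hsum ka c' kb d' hka hc' hkb hd'
          hc1'.symm hd1'.symm hab (hc2'.trans hd2'.symm) hmema hmemb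
      -- second rectangle: (k, k', c, c')
      exact zsRectEq p q hp hq hpq n hn ζ hprim S hS hsum k k' c c' hk hk' hc hc'
        hkk' (hc1.trans hc1'.symm) hc2.symm hc2'.symm hstep.1 hstep'.1
    refine ⟨∅, Finset.empty_subset _, (range p).filter (fun β => ζ ^ β ∈ S),
      Finset.filter_subset _ _, ?_, ?_⟩
    · simp
    · rw [Finset.biUnion_empty, Finset.empty_union]
      exact zsUnion q p n hq.pos hp.pos (by rw [hn, mul_comm]) ζ hprim S hS hrow
end

section
/- Let p and q be distinct primes, n = p·q, and ζ = exp(2πi/n) ∈ ℂ. Every rational linear relation among 1, ζ, …, ζ^(n−1) is generated by the cyclotomic relations of the two prime factors: if λ : ℕ → ℚ satisfies ∑_{α=0}^{n−1} λ(α) · ζ^α = 0, then there exist μp : ℕ → ℚ and μq : ℕ → ℚ such that λ(α) = μp(α mod q) + μq(α mod p) for every α < n. -/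
open Polynomial

private lemma psi_coeff_aux {m : ℕ} (hm : 0 < m) (k α : ℕ) (hα : α < k * m)
    (A : ℚ[X]) (hA : A.degree < (m : WithBot ℕ)) :
    ((∑ t ∈ Finset.range k, (X : ℚ[X]) ^ (m * t)) * A).coeff α = A.coeff (α % m) := by
  rw [Finset.sum_mul, Polynomial.finset_sum_coeff]
  have hd := Nat.mod_add_div α m
  have hmem : α / m ∈ Finset.range k := by
    rw [Finset.mem_range]
    exact Nat.div_lt_of_lt_mul (by rwa [mul_comm] at hα)
  rw [Finset.sum_eq_single (α / m)]
  · rw [mul_comm, coeff_mul_X_pow', if_pos (by omega)]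
    congr 1
    omega
  · intro t _ hne
    rw [mul_comm, coeff_mul_X_pow']
    by_cases h : m * t ≤ α
    · rw [if_pos h]
      apply Polynomial.coeff_eq_zero_of_degree_lt
      refine lt_of_lt_of_le hA ?_
      have hle : m ≤ α - m * t := by
        rcases lt_or_gt_of_ne hne with hlt | hgt
        · have h1 : m * (t + 1) ≤ m * (α / m) := Nat.mul_le_mul_left m hlt
          rw [Nat.mul_succ] at h1
          omega
        · have hmod := Nat.mod_lt α hm
          have h1 : m * (α / m + 1) ≤ m * t := Nat.mul_le_mul_left m hgt
          rw [Nat.mul_succ] at h1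
          omega
      exact_mod_cast hle
    · rw [if_neg h]
  · intro h
    exact absurd hmem h

private lemma deg_mul_lt_aux {f g : ℚ[X]} {a b n : ℕ} (hf : f.degree = (a : WithBot ℕ))
    (hg : g.degree < (b : WithBot ℕ)) (hab : a + b ≤ n) :
    (f * g).degree < (n : WithBot ℕ) := by
  rcases eq_or_ne g 0 with rfl | hg0
  · rw [mul_zero, Polynomial.degree_zero, Nat.cast_withBot]
    exact WithBot.bot_lt_coe n
  have hf0 : f ≠ 0 := fun h => by simp [h] at hf
  have hfa : f.natDegree = a := Polynomial.natDegree_eq_of_degree_eq_some hf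
  have hgb : g.natDegree < b := (Polynomial.natDegree_lt_iff_degree_lt hg0).mpr hg
  rw [← Polynomial.natDegree_lt_iff_degree_lt (mul_ne_zero hf0 hg0),
    Polynomial.natDegree_mul hf0 hg0, hfa]
  omega

/-- For `n = p·q` a product of two distinct primes and `ζ = exp(2πi/n)`, every rational
linear relation among `1, ζ, …, ζ^(n−1)` is generated by the cyclotomic relations of the
two prime factors: if `∑_{α<n} λ(α)·ζ^α = 0` then `λ(α) = μp(α mod q) + μq(α mod p)`. -/
theorem rat_relation_two_primes (p q : ℕ)
    (hp : Nat.Prime p) (hq : Nat.Prime q) (hpq : p ≠ q)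
    (n : ℕ) (hn : n = p * q)
    (ζ : ℂ) (hζ : ζ = Complex.exp (2 * Real.pi * Complex.I / n))
    (lam : ℕ → ℚ) (hrel : ∑ α ∈ Finset.range n, (lam α : ℂ) * ζ ^ α = 0) :
    ∃ μp μq : ℕ → ℚ, ∀ α < n, lam α = μp (α % q) + μq (α % p) := by
  classical
  have hp0 : 0 < p := hp.pos
  have hq0 : 0 < q := hq.pos
  have hn0 : 0 < n := by rw [hn]; positivity
  have hprim : IsPrimitiveRoot ζ n := by
    rw [hζ]; exact Complex.isPrimitiveRoot_exp n hn0.ne'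
  haveI : Fact p.Prime := ⟨hp⟩
  haveI : Fact q.Prime := ⟨hq⟩
  -- The relation polynomial
  set P : ℚ[X] := ∑ α ∈ Finset.range n, C (lam α) * X ^ α with hP
  have hPζ : aeval ζ P = 0 := by
    rw [hP, map_sum]
    simpa using hrel
  have hdvd : cyclotomic n ℚ ∣ P := by
    rw [cyclotomic_eq_minpoly_rat hprim hn0]
    exact minpoly.dvd ℚ ζ hPζ
  obtain ⟨R, hR⟩ := hdvd
  obtain ⟨U, V, hUV⟩ := cyclotomic.isCoprime_rat hpq
  -- the two "prime relation" polynomials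
  set Ψp : ℚ[X] := ∑ t ∈ Finset.range p, X ^ (q * t) with hΨp
  set Ψq : ℚ[X] := ∑ t ∈ Finset.range q, X ^ (p * t) with hΨq
  have hΨpeq : Ψp = cyclotomic n ℚ * cyclotomic p ℚ := by
    have hqp : ¬ q ∣ p := fun h => hpq ((Nat.prime_dvd_prime_iff_eq hq hp).mp h).symm
    have h1 := cyclotomic_expand_eq_cyclotomic_mul (R := ℚ) hq hqp
    rw [mul_comm p q, mul_comm q p, ← hn] at h1
    rw [← h1, cyclotomic_prime ℚ p, map_sum, hΨp]
    exact Finset.sum_congr rfl fun t _ => by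
      rw [map_pow, Polynomial.expand_X, ← pow_mul]
  have hΨqeq : Ψq = cyclotomic n ℚ * cyclotomic q ℚ := by
    have hpq' : ¬ p ∣ q := fun h => hpq ((Nat.prime_dvd_prime_iff_eq hp hq).mp h)
    have h1 := cyclotomic_expand_eq_cyclotomic_mul (R := ℚ) hp hpq'
    rw [mul_comm q p, ← hn] at h1
    rw [← h1, cyclotomic_prime ℚ q, map_sum, hΨq]
    exact Finset.sum_congr rfl fun t _ => by
      rw [map_pow, Polynomial.expand_X, ← pow_mul]
  have hΨpX : Ψp * (X ^ q - 1) = X ^ n - 1 := by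
    have h1 := geom_sum_mul ((X : ℚ[X]) ^ q) p
    rw [← pow_mul, mul_comm q p, ← hn] at h1
    rw [hΨp, ← h1]
    congr 1
    exact Finset.sum_congr rfl fun t _ => by rw [← pow_mul, mul_comm]
  have hΨqX : Ψq * (X ^ p - 1) = X ^ n - 1 := by
    have h1 := geom_sum_mul ((X : ℚ[X]) ^ p) q
    rw [← pow_mul, ← hn] at h1
    rw [hΨq, ← h1]
    congr 1
    exact Finset.sum_congr rfl fun t _ => by rw [← pow_mul, mul_comm]
  -- P = Ψp * (U*R) + Ψq * (V*R)
  have hP1 : P = Ψp * (U * R) + Ψq * (V * R) := by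
    rw [hΨpeq, hΨqeq, hR]
    have h2 : cyclotomic n ℚ * R * (U * cyclotomic p ℚ + V * cyclotomic q ℚ)
        = cyclotomic n ℚ * R := by rw [hUV, mul_one]
    rw [← h2]; ring
  have hmq : Monic ((X : ℚ[X]) ^ q - 1) := by
    simpa using monic_X_pow_sub_C (1 : ℚ) hq0.ne'
  have hmp : Monic ((X : ℚ[X]) ^ p - 1) := by
    simpa using monic_X_pow_sub_C (1 : ℚ) hp0.ne'
  set A : ℚ[X] := (U * R) %ₘ (X ^ q - 1) with hA
  set S : ℚ[X] := (U * R) /ₘ (X ^ q - 1) with hS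
  have hUR : U * R = A + (X ^ q - 1) * S := (modByMonic_add_div (U * R) (X ^ q - 1)).symm
  set B1 : ℚ[X] := V * R + (X ^ p - 1) * S with hB1
  have hP2 : P = Ψp * A + Ψq * B1 := by
    rw [hP1, hUR, hB1, mul_add, mul_add]
    have h1 : Ψp * ((X ^ q - 1) * S) = Ψq * ((X ^ p - 1) * S) := by
      rw [← mul_assoc, ← mul_assoc, hΨpX, hΨqX]
    rw [h1]; ring
  set B : ℚ[X] := B1 %ₘ (X ^ p - 1) with hB
  set T : ℚ[X] := B1 /ₘ (X ^ p - 1) with hT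
  have hB1eq : B1 = B + (X ^ p - 1) * T := (modByMonic_add_div B1 (X ^ p - 1)).symm
  have hP3 : P = Ψp * A + Ψq * B + (X ^ n - 1) * T := by
    rw [hP2, hB1eq, mul_add, ← add_assoc]
    congr 1
    rw [← mul_assoc, hΨqX]
  -- degree bounds
  have hdegA : A.degree < (q : WithBot ℕ) := by
    have h := degree_modByMonic_lt (U * R) hmq
    rw [hA]
    rwa [show ((X : ℚ[X]) ^ q - 1) = X ^ q - C 1 by rw [map_one],
      degree_X_pow_sub_C hq0] at h
  have hdegB : B.degree < (p : WithBot ℕ) := by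
    have h := degree_modByMonic_lt B1 hmp
    rw [hB]
    rwa [show ((X : ℚ[X]) ^ p - 1) = X ^ p - C 1 by rw [map_one],
      degree_X_pow_sub_C hp0] at h
  have hcopn : Nat.Coprime p q := (Nat.coprime_primes hp hq).mpr hpq
  have hdegΨp : Ψp.degree = (((p - 1) * q : ℕ) : WithBot ℕ) := by
    rw [hΨpeq, degree_mul, degree_cyclotomic, degree_cyclotomic, hn,
      Nat.totient_mul hcopn, Nat.totient_prime hp, Nat.totient_prime hq, ← Nat.cast_add]
    congr 1
    have : q - 1 + 1 = q := Nat.succ_pred_eq_of_pos hq0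
    calc (p-1)*(q-1) + (p-1) = (p-1)*((q-1)+1) := by ring
      _ = (p-1)*q := by rw [this]
  have hdegΨq : Ψq.degree = (((q - 1) * p : ℕ) : WithBot ℕ) := by
    rw [hΨqeq, degree_mul, degree_cyclotomic, degree_cyclotomic, hn,
      Nat.totient_mul hcopn, Nat.totient_prime hp, Nat.totient_prime hq, ← Nat.cast_add]
    congr 1
    have : p - 1 + 1 = p := Nat.succ_pred_eq_of_pos hp0
    calc (p-1)*(q-1) + (q-1) = (q-1)*((p-1)+1) := by ring
      _ = (q-1)*p := by rw [this]
  have hnpq : (p - 1) * q + q ≤ n := by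
    have h' : p - 1 + 1 = p := Nat.sub_add_cancel hp0
    calc (p-1)*q + q = ((p-1)+1)*q := by ring
      _ = p * q := by rw [h']
      _ ≤ n := hn.ge
  have hnqp : (q - 1) * p + p ≤ n := by
    have h' : q - 1 + 1 = q := Nat.sub_add_cancel hq0
    calc (q-1)*p + p = ((q-1)+1)*p := by ring
      _ = q * p := by rw [h']
      _ ≤ n := by rw [hn, mul_comm]
  have hltA : (Ψp * A).degree < (n : WithBot ℕ) := deg_mul_lt_aux hdegΨp hdegA hnpq
  have hltB : (Ψq * B).degree < (n : WithBot ℕ) := deg_mul_lt_aux hdegΨq hdegB hnqp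
  have hdegP : P.degree < (n : WithBot ℕ) := by
    rw [hP]
    refine lt_of_le_of_lt (degree_sum_le _ _) ?_
    rw [Finset.sup_lt_iff (by rw [Nat.cast_withBot]; exact WithBot.bot_lt_coe n)]
    intro α hα
    refine lt_of_le_of_lt (degree_C_mul_X_pow_le _ _) ?_
    exact_mod_cast Finset.mem_range.mp hα
  -- conclude T = 0
  have hT0 : T = 0 := by
    by_contra hTne
    have h1 : ((X ^ n - 1 : ℚ[X]) * T).degree < (n : WithBot ℕ) := by
      have : (X ^ n - 1 : ℚ[X]) * T = P - Ψp * A - Ψq * B := by rw [hP3]; ring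
      rw [this]
      refine lt_of_le_of_lt (degree_sub_le _ _) (max_lt ?_ hltB)
      exact lt_of_le_of_lt (degree_sub_le _ _) (max_lt hdegP hltA)
    have h2 : (n : WithBot ℕ) ≤ ((X ^ n - 1 : ℚ[X]) * T).degree := by
      rw [degree_mul, show ((X : ℚ[X]) ^ n - 1) = X ^ n - C 1 by rw [map_one],
        degree_X_pow_sub_C hn0]
      exact le_add_of_nonneg_right (zero_le_degree_iff.mpr hTne)
    exact absurd (lt_of_le_of_lt h2 h1) (lt_irrefl _)
  have hPfin : P = Ψp * A + Ψq * B := by rw [hP3, hT0, mul_zero, add_zero]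
  -- extract coefficients
  refine ⟨fun j => A.coeff j, fun i => B.coeff i, fun α hα => ?_⟩
  have hcoeff : P.coeff α = lam α := by
    rw [hP, Polynomial.finset_sum_coeff]
    rw [Finset.sum_eq_single α]
    · rw [coeff_C_mul, coeff_X_pow, if_pos rfl, mul_one]
    · intro β _ hne
      rw [coeff_C_mul, coeff_X_pow, if_neg (Ne.symm hne), mul_zero]
    · intro h
      exact absurd (Finset.mem_range.mpr hα) h
  have h1 : (Ψp * A).coeff α = A.coeff (α % q) := by
    rw [hΨp]
    exact psi_coeff_aux hq0 p α (hn ▸ hα) A hdegA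
  have h2 : (Ψq * B).coeff α = B.coeff (α % p) := by
    rw [hΨq]
    exact psi_coeff_aux hp0 q α (by rw [mul_comm]; exact hn ▸ hα) B hdegB
  rw [← hcoeff, hPfin, Polynomial.coeff_add, h1, h2]
end

section
/- Let k be a positive integer and n = 2k+1. Let B be an n×n matrix over ℚ whose entries are all 0 or 1, which is invertible, and each of whose columns sums to k (that is, ∑_i B i j = k for every column index j). Define the (n+1)×(n+1) matrix C over ℚ as follows: the first row of C consists entirely of 1's; for each i ∈ {0,…,n−1}, row i+1 of C has entry B i j in column j for j ∈ {0,…,n−1} and entry 1 in the last column. Then C is invertible. -/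
/-- Appendix G of the paper: let `n = 2k+1` and let `B` be an invertible `n×n` 0–1
matrix over `ℚ` each of whose columns sums to `k`. Border `B` with a first row of
ones and a last column of ones to obtain an `(n+1)×(n+1)` matrix `C`. Then `C` is
invertible. -/
theorem bordered_matrix_invertible (k : ℕ) (hk : 0 < k) (n : ℕ) (hn : n = 2 * k + 1)
    (B : Matrix (Fin n) (Fin n) ℚ)
    (hB01 : ∀ i j, B i j = 0 ∨ B i j = 1)
    (hBdet : B.det ≠ 0)
    (hcol : ∀ j, ∑ i, B i j = (k : ℚ))
    (C : Matrix (Fin (n + 1)) (Fin (n + 1)) ℚ)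
    (hCtop : ∀ j, C 0 j = 1)
    (hCmid : ∀ (i j : Fin n), C i.succ j.castSucc = B i j)
    (hClast : ∀ i : Fin n, C i.succ (Fin.last n) = 1) :
    C.det ≠ 0 := by
  intro hdet
  obtain ⟨v, hv0, hv⟩ := (Matrix.exists_mulVec_eq_zero_iff).2 hdet
  set w : Fin n → ℚ := fun j => v j.castSucc with hw
  set t : ℚ := v (Fin.last n) with ht
  -- row 0 equation
  have h0 : (∑ j, w j) + t = 0 := by
    have := congrFun hv 0
    simp only [Matrix.mulVec, dotProduct, Pi.zero_apply] at this
    rw [Fin.sum_univ_castSucc] at this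
    simpa [hCtop, hw, ht] using this
  -- rows i.succ equations
  have h1 : ∀ i : Fin n, (∑ j, B i j * w j) + t = 0 := by
    intro i
    have := congrFun hv i.succ
    simp only [Matrix.mulVec, dotProduct, Pi.zero_apply] at this
    rw [Fin.sum_univ_castSucc] at this
    simpa [hCmid, hClast, hw, ht] using this
  -- sum of all the B-row equations
  have hsum : (k : ℚ) * (∑ j, w j) + n * t = 0 := by
    have : ∑ i : Fin n, ((∑ j, B i j * w j) + t) = 0 := by simp [h1]
    rw [Finset.sum_add_distrib, Finset.sum_comm] at this
    simp only [← Finset.sum_mul, hcol] at this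
    rw [← Finset.mul_sum] at this
    simpa [Finset.sum_const, nsmul_eq_mul] using this
  have hsw : ∑ j, w j = -t := by linarith [h0]
  have htz : t = 0 := by
    rw [hsw, hn] at hsum
    push_cast at hsum
    have : ((k : ℚ) + 1) * t = 0 := by ring_nf; ring_nf at hsum; linarith
    have hk1 : (k : ℚ) + 1 ≠ 0 := by positivity
    exact (mul_eq_zero.1 this).resolve_left hk1
  have hBw : B.mulVec w = 0 := by
    funext i
    have := h1 i
    rw [htz, add_zero] at this
    simpa [Matrix.mulVec, dotProduct] using this
  have hwz : w = 0 := by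
    by_contra hne
    exact hBdet ((Matrix.exists_mulVec_eq_zero_iff).1 ⟨w, hne, hBw⟩)
  apply hv0
  funext j
  refine Fin.lastCases ?_ ?_ j
  · simpa [ht] using htz
  · intro i
    have := congrFun hwz i
    simpa [hw] using this
end

section
/- For every integer r ≥ 2, 2 · ∑_{i=2}^{r−1} (i−1) · C(r, i) · C(r, r−i) = (r−2) · (C(2r, r) − 2). -/
open Finset

private lemma vdm (m n k : ℕ) :
    ∑ i ∈ range (k + 1), m.choose i * n.choose (k - i) = (m + n).choose k := by
  rw [Nat.add_choose_eq, Finset.Nat.sum_antidiagonal_eq_sum_range_succ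
    (fun i j => m.choose i * n.choose j)]

/-- The binomial identity from Appendix H of the paper: for every integer `r ≥ 2`,
`2 · ∑_{i=2}^{r−1} (i−1)·C(r,i)·C(r,r−i) = (r−2)·(C(2r,r) − 2)`. -/
theorem appendix_h_identity (r : ℕ) (hr : 2 ≤ r) :
    2 * ∑ i ∈ Finset.Icc 2 (r - 1), (i - 1) * Nat.choose r i * Nat.choose r (r - i) =
      (r - 2) * (Nat.choose (2 * r) r - 2) := by
  set S := ∑ i ∈ Finset.Icc 2 (r - 1), (i - 1) * Nat.choose r i * Nat.choose r (r - i)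
    with hSdef
  set c : ℕ → ℕ := fun i => Nat.choose r i * Nat.choose r (r - i) with hc
  have hIcc : Finset.Icc 2 (r - 1) = Finset.Ico 2 r := by
    have hre : r = (r - 1) + 1 := by omega
    conv_rhs => rw [hre]
    rw [Finset.Ico_add_one_right_eq_Icc]
  set N := Nat.choose (2 * r) r with hNdef
  set M := Nat.choose (2 * r - 1) (r - 1) with hMdef
  -- Lemma A : full Vandermonde sum
  have hA : ∑ i ∈ range (r + 1), c i = N := by
    rw [hNdef, two_mul]
    exact vdm r r r
  have hM : ∑ i ∈ range ((r - 1) + 1), (r - 1).choose i * r.choose (r - 1 - i) = M := by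
    rw [vdm, hMdef]
    congr 1
    omega
  -- Lemma B : weighted sum
  have hB : ∑ i ∈ range (r + 1), i * c i = r * M := by
    rw [Finset.sum_range_succ']
    simp only [Nat.zero_mul, Nat.add_zero]
    have key : ∀ j, (j + 1) * c (j + 1) = r * ((r - 1).choose j * r.choose (r - 1 - j)) := by
      intro j
      have h1 : r * (r - 1).choose j = r.choose (j + 1) * (j + 1) := by
        have := Nat.add_one_mul_choose_eq (r - 1) j
        rwa [Nat.sub_add_cancel (by omega)] at this
      have h2 : r - (j + 1) = r - 1 - j := by omega
      simp only [hc, h2]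
      conv_rhs => rw [← Nat.mul_assoc, h1]
      ring
    rw [Finset.sum_congr rfl (fun j _ => key j), ← Finset.mul_sum]
    congr 1
    have hrange : range r = range ((r - 1) + 1) := by congr 1; omega
    rw [hrange]
    exact hM
  -- Lemma C : N = 2 * M
  have hC : N = 2 * M := by
    have h := Nat.add_one_mul_choose_eq (2 * r - 1) (r - 1)
    rw [Nat.sub_add_cancel (by omega : 1 ≤ 2 * r), Nat.sub_add_cancel (by omega : 1 ≤ r)] at h
    rw [← hMdef, ← hNdef] at h
    have h' : 2 * M * r = N * r := by rw [← h]; ring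
    exact (Nat.eq_of_mul_eq_mul_right (by omega) h').symm
  set P := ∑ i ∈ Finset.Ico 2 r, i * c i with hPdef
  set Q := ∑ i ∈ Finset.Ico 2 r, c i with hQdef
  have hc0 : c 0 = 1 := by simp [hc]
  have hc1 : c 1 = r * r := by
    simp only [hc, Nat.choose_one_right]
    rw [Nat.choose_symm (by omega), Nat.choose_one_right]
  have hcr : c r = 1 := by simp [hc]
  -- split range (r+1) = Ico 0 2 ∪ Ico 2 r ∪ Ico r (r+1)
  have hsplit : ∀ f : ℕ → ℕ, ∑ i ∈ range (r + 1), f i =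
      (f 0 + f 1) + (∑ i ∈ Finset.Ico 2 r, f i) + f r := by
    intro f
    have e1 : ∑ i ∈ Finset.Ico 0 2, f i = f 0 + f 1 := by
      rw [← Finset.range_eq_Ico]
      simp [Finset.sum_range_succ]
    have e2 : ∑ i ∈ Finset.Ico r (r + 1), f i = f r := by
      rw [Finset.Ico_add_one_right_eq_Icc, Finset.Icc_self, Finset.sum_singleton]
    rw [Finset.range_eq_Ico,
      ← Finset.sum_Ico_consecutive f (Nat.zero_le r) (Nat.le_succ r),
      ← Finset.sum_Ico_consecutive f (by omega : (0:ℕ) ≤ 2) (by omega : 2 ≤ r), e1, e2]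
  have hQfull : N = 1 + r * r + Q + 1 := by
    rw [← hA, hsplit c, hc0, hc1, hcr]
  have hPfull : r * M = r * r + P + r := by
    rw [← hB, hsplit (fun i => i * c i)]
    simp only [Nat.zero_mul, Nat.one_mul, hc1, hcr, Nat.mul_one]
    omega
  have hSP : S + Q = P := by
    rw [hSdef, hIcc, ← Finset.sum_add_distrib]
    apply Finset.sum_congr rfl
    intro i hi
    have h2 : 2 ≤ i := (Finset.mem_Ico.mp hi).1
    have hi' : i = (i - 1) + 1 := by omega
    rw [hi', hc]
    simp only [Nat.add_sub_cancel]
    ring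
  have hN2 : 2 ≤ N := by
    have : 0 < M := Nat.choose_pos (by omega)
    omega
  -- final arithmetic over ℤ
  zify [hr, hN2]
  have hQ' : (N : ℤ) = 1 + r * r + Q + 1 := by exact_mod_cast hQfull
  have hP' : (r : ℤ) * M = r * r + P + r := by exact_mod_cast hPfull
  have hS' : (S : ℤ) + Q = P := by exact_mod_cast hSP
  have hC' : (N : ℤ) = 2 * M := by exact_mod_cast hC
  linear_combination 2 * hS' - 2 * hP' + 2 * hQ' - (r : ℤ) * hC'
end
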